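/- arXiv:2002.07149 — 5 statements merged into one kernel-verified Lean document; each statement's English description precedes it below -/
import Mathlib

section
/- Let k = 2n+1 with n ≥ 1, and let M be a real skew-symmetric k×k matrix with entries M_{ij}. For each i ∈ {1,…,k} define a_i = Σ (-1)^{σ+i} M_{j₁j₂} M_{j₃j₄} ⋯ M_{j_{2n-1}j_{2n}}, where the sum is over all sequences (j₁,…,j_{2n}) in which each element of {1,…,k}\{i} appears exactly once, and σ is the parity of (j₁,…,j_{2n}) regarded as a permutation of the elements of {1,…,k}\{i} listed in increasing order. Then M a = 0, i.e., Σ_{i=1}^k M_{li} a_i = 0 for every l ∈ {1,…,k}. -/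
open Matrix

/-- The vector `a = a(M)` of signed sub-Pfaffian sums of a skew-symmetric
`(2n+1) × (2n+1)` matrix `M`:
`a_i = Σ (-1)^{σ+i} M_{j₁j₂} ⋯ M_{j_{2n-1}j_{2n}}`, the sum being over all sequences
`(j₁, …, j_{2n})` in which each element of `{1,…,k} \ {i}` appears exactly once
(equivalently, over all permutations `τ` of `Fin (2n)` composed with the increasing
enumeration `i.succAbove` of `{1,…,k} \ {i}`), with `σ` the parity of that permutation. -/
noncomputable def casimirVec (n : ℕ) (M : Matrix (Fin (2*n+1)) (Fin (2*n+1)) ℝ) :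
    Fin (2*n+1) → ℝ :=
  fun i => (-1 : ℝ) ^ ((i : ℕ) + 1) *
    ∑ τ : Equiv.Perm (Fin (2*n)),
      ((Equiv.Perm.sign τ : ℤ) : ℝ) *
        ∏ m : Fin n,
          M (Fin.succAbove i (τ ⟨2*(m : ℕ), by have := m.isLt; omega⟩))
            (Fin.succAbove i (τ ⟨2*(m : ℕ)+1, by have := m.isLt; omega⟩))

open Equiv Equiv.Perm Fin

theorem Equiv.apply_inv_self {α : Type*} (π : Equiv.Perm α) (x : α) : π (π⁻¹ x) = x :=
  π.apply_symm_apply x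

variable {n : ℕ}

def Phi (i : Fin (2*n+1)) (τ : Equiv.Perm (Fin (2*n))) : Equiv.Perm (Fin (2*n+1)) :=
  (Fin.cycleRange i)⁻¹ * finRotate (2*n+1) *
    (Equiv.permCongr finSuccEquivLast.symm τ.optionCongr)

lemma Phi_castSucc (i : Fin (2*n+1)) (τ : Equiv.Perm (Fin (2*n))) (x : Fin (2*n)) :
    Phi i τ (Fin.castSucc x) = i.succAbove (τ x) := by
  have h1 : (Equiv.permCongr finSuccEquivLast.symm τ.optionCongr) (Fin.castSucc x)
      = Fin.castSucc (τ x) := by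
    simp [Equiv.permCongr_apply]
  have h2 : finRotate (2*n+1) (Fin.castSucc (τ x)) = Fin.succ (τ x) := by
    rw [finRotate_succ_apply, Fin.coeSucc_eq_succ]
  rw [Phi, Equiv.Perm.mul_apply, Equiv.Perm.mul_apply, h1, h2]
  rw [show ((Fin.cycleRange i)⁻¹ : Equiv.Perm (Fin (2*n+1))) = (Fin.cycleRange i).symm from rfl]
  rw [Equiv.symm_apply_eq, Fin.cycleRange_succAbove]

lemma Phi_last (i : Fin (2*n+1)) (τ : Equiv.Perm (Fin (2*n))) :
    Phi i τ (Fin.last (2*n)) = i := by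
  have h1 : (Equiv.permCongr finSuccEquivLast.symm τ.optionCongr) (Fin.last (2*n))
      = Fin.last (2*n) := by
    simp [Equiv.permCongr_apply]
  rw [Phi, Equiv.Perm.mul_apply, Equiv.Perm.mul_apply, h1, finRotate_last]
  rw [show ((Fin.cycleRange i)⁻¹ : Equiv.Perm (Fin (2*n+1))) = (Fin.cycleRange i).symm from rfl]
  rw [Equiv.symm_apply_eq, Fin.cycleRange_self]

lemma sign_Phi (i : Fin (2*n+1)) (τ : Equiv.Perm (Fin (2*n))) :
    Equiv.Perm.sign (Phi i τ) = (-1)^(i:ℕ) * Equiv.Perm.sign τ := by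
  rw [Phi, _root_.map_mul, _root_.map_mul, map_inv, Fin.sign_cycleRange, sign_finRotate,
    Equiv.Perm.sign_permCongr, Equiv.optionCongr_sign]
  simp [pow_mul]

lemma Phi_bijective :
    Function.Bijective (fun p : Fin (2*n+1) × Equiv.Perm (Fin (2*n)) => Phi p.1 p.2) := by
  rw [Fintype.bijective_iff_injective_and_card]
  constructor
  · rintro ⟨i, τ⟩ ⟨j, σ⟩ h
    simp only at h
    have hij : i = j := by rw [← Phi_last i τ, ← Phi_last j σ, h]
    subst hij
    have hτσ : τ = σ := by
      refine Equiv.ext fun x => ?_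
      have := congrArg (fun π : Equiv.Perm (Fin (2*n+1)) => π (Fin.castSucc x)) h
      simp only [Phi_castSucc] at this
      exact Fin.succAbove_right_injective this
    rw [hτσ]
  · simp [Fintype.card_perm, Nat.factorial_succ]



def partnerPos (l : Fin (2*n+1)) (π : Equiv.Perm (Fin (2*n+1)))
    (h : π (Fin.last (2*n)) ≠ l) : Fin (2*n+1) :=
  ⟨if (π⁻¹ l).val % 2 = 0 then (π⁻¹ l).val + 1 else (π⁻¹ l).val - 1, by
    have hr : (π⁻¹ l) ≠ Fin.last (2*n) := by
      intro e
      exact h (by rw [← e]; exact π.apply_inv_self l)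
    have := Fin.val_lt_last hr
    split <;> omega⟩

noncomputable def flip2 (l : Fin (2*n+1)) (π : Equiv.Perm (Fin (2*n+1))) :
    Equiv.Perm (Fin (2*n+1)) :=
  if h : π (Fin.last (2*n)) = l then π
  else π * Equiv.swap (partnerPos l π h) (Fin.last (2*n))

section facts
variable (l : Fin (2*n+1)) (π : Equiv.Perm (Fin (2*n+1)))

lemma r_ne_last (h : π (Fin.last (2*n)) ≠ l) : π⁻¹ l ≠ Fin.last (2*n) := by
  intro e
  exact h (by rw [← e]; exact π.apply_inv_self l)

lemma r_lt (h : π (Fin.last (2*n)) ≠ l) : (π⁻¹ l).val < 2*n := Fin.val_lt_last (r_ne_last l π h)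

lemma partnerPos_ne_last (h : π (Fin.last (2*n)) ≠ l) : partnerPos l π h ≠ Fin.last (2*n) := by
  have := r_lt l π h
  rw [Fin.ne_iff_vne, partnerPos, Fin.val_last]
  simp only
  split <;> omega

lemma partnerPos_ne_r (h : π (Fin.last (2*n)) ≠ l) : partnerPos l π h ≠ π⁻¹ l := by
  have := r_lt l π h
  rw [Fin.ne_iff_vne, partnerPos]
  simp only
  split <;> omega

lemma flip2_of_ne (h : π (Fin.last (2*n)) ≠ l) : flip2 l π = π * Equiv.swap (partnerPos l π h) (Fin.last (2*n)) :=
  dif_neg h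

lemma flip2_last (h : π (Fin.last (2*n)) ≠ l) : flip2 l π (Fin.last (2*n)) = π (partnerPos l π h) := by
  rw [flip2_of_ne l π h, Equiv.Perm.mul_apply, Equiv.swap_apply_right]

lemma flip2_last_ne (h : π (Fin.last (2*n)) ≠ l) : flip2 l π (Fin.last (2*n)) ≠ l := by
  rw [flip2_last l π h]
  intro e
  have : partnerPos l π h = π⁻¹ l :=
    π.injective (by rw [e, π.apply_inv_self])
  exact partnerPos_ne_r l π h this

lemma flip2_inv_l (h : π (Fin.last (2*n)) ≠ l) : (flip2 l π)⁻¹ l = π⁻¹ l := by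
  rw [Equiv.Perm.inv_eq_iff_eq, flip2_of_ne l π h, Equiv.Perm.mul_apply,
    Equiv.swap_apply_of_ne_of_ne (partnerPos_ne_r l π h).symm (r_ne_last l π h),
    π.apply_inv_self]

lemma flip2_flip2 (h : π (Fin.last (2*n)) ≠ l) : flip2 l (flip2 l π) = π := by
  rw [flip2, dif_neg (flip2_last_ne l π h)]
  have hp : partnerPos l (flip2 l π) (flip2_last_ne l π h) = partnerPos l π h := by
    have hv := congrArg Fin.val (flip2_inv_l l π h)
    rw [Fin.ext_iff, partnerPos, partnerPos]
    simp only [hv]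
  rw [hp, flip2_of_ne l π h, mul_assoc, Equiv.swap_mul_self, mul_one]

end facts

def posA (m : Fin n) : Fin (2*n+1) := ⟨2*(m:ℕ), by have := m.isLt; omega⟩
def posB (m : Fin n) : Fin (2*n+1) := ⟨2*(m:ℕ)+1, by have := m.isLt; omega⟩

lemma key (M : Matrix (Fin (2*n+1)) (Fin (2*n+1)) ℝ)
    (skew : ∀ a b, M a b = - M b a) (l : Fin (2*n+1)) :
    ∑ π : Equiv.Perm (Fin (2*n+1)), ((Equiv.Perm.sign π : ℤ) : ℝ) *
      (M l (π (Fin.last (2*n))) * ∏ m : Fin n, M (π (posA m)) (π (posB m))) = 0 := by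
  have diag : ∀ a, M a a = 0 := fun a => by have := skew a a; linarith
  set f : Equiv.Perm (Fin (2*n+1)) → ℝ := fun π =>
    ((Equiv.Perm.sign π : ℤ) : ℝ) *
      (M l (π (Fin.last (2*n))) * ∏ m : Fin n, M (π (posA m)) (π (posB m))) with hf
  have hzero : ∀ π : Equiv.Perm (Fin (2*n+1)), π (Fin.last (2*n)) = l → f π = 0 := by
    intro π h
    rw [hf]
    simp only [h, diag l, zero_mul, mul_zero]
  have hneg : ∀ π : Equiv.Perm (Fin (2*n+1)), (h : π (Fin.last (2*n)) ≠ l) →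
      f (flip2 l π) = - f π := by
    intro π h
    have hrl : π (π⁻¹ l) = l := π.apply_inv_self l
    have hrlt : (π⁻¹ l).val < 2*n := r_lt l π h
    have hpval : (partnerPos l π h).val
        = if (π⁻¹ l).val % 2 = 0 then (π⁻¹ l).val + 1 else (π⁻¹ l).val - 1 := rfl
    have hpll : partnerPos l π h ≠ Fin.last (2*n) := partnerPos_ne_last l π h
    have hpr : partnerPos l π h ≠ π⁻¹ l := partnerPos_ne_r l π h
    have hrll : π⁻¹ l ≠ Fin.last (2*n) := r_ne_last l π h
    set r := π⁻¹ l
    set p := partnerPos l π h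
    rw [flip2_of_ne l π h]
    set π' := π * Equiv.swap p (Fin.last (2*n)) with hπ'
    have hv_last : π' (Fin.last (2*n)) = π p := by
      rw [hπ', Equiv.Perm.mul_apply, Equiv.swap_apply_right]
    have hv_p : π' p = π (Fin.last (2*n)) := by
      rw [hπ', Equiv.Perm.mul_apply, Equiv.swap_apply_left]
    have hv_other : ∀ x, x ≠ p → x ≠ Fin.last (2*n) → π' x = π x := fun x h1 h2 => by
      rw [hπ', Equiv.Perm.mul_apply, Equiv.swap_apply_of_ne_of_ne h1 h2]
    have hsign : ((Equiv.Perm.sign π' : ℤ) : ℝ) = -((Equiv.Perm.sign π : ℤ) : ℝ) := by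
      rw [hπ', _root_.map_mul, Equiv.Perm.sign_swap hpll]
      push_cast
      ring
    set m0 : Fin n := ⟨(r.val) / 2, by omega⟩ with hm0
    have hm0v : (m0 : ℕ) = r.val / 2 := rfl
    have heq : ∏ m ∈ Finset.univ.erase m0, M (π' (posA m)) (π' (posB m))
        = ∏ m ∈ Finset.univ.erase m0, M (π (posA m)) (π (posB m)) := by
      refine Finset.prod_congr rfl fun m hm => ?_
      have hmm0 : (m : ℕ) ≠ r.val / 2 := by
        have := Finset.ne_of_mem_erase hm
        rw [hm0, Fin.ne_iff_vne] at this
        exact this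
      have hmlt := m.isLt
      have h1 : posA m ≠ p := by
        rw [Fin.ne_iff_vne, hpval]; show 2*(m:ℕ) ≠ _; split <;> omega
      have h2 : posB m ≠ p := by
        rw [Fin.ne_iff_vne, hpval]; show 2*(m:ℕ)+1 ≠ _; split <;> omega
      have h3 : posA m ≠ Fin.last (2*n) := by
        rw [Fin.ne_iff_vne]; show 2*(m:ℕ) ≠ 2*n; omega
      have h4 : posB m ≠ Fin.last (2*n) := by
        rw [Fin.ne_iff_vne]; show 2*(m:ℕ)+1 ≠ 2*n; omega
      rw [hv_other _ h1 h3, hv_other _ h2 h4]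
    have hsplit : ∀ σ : Equiv.Perm (Fin (2*n+1)),
        ∏ m : Fin n, M (σ (posA m)) (σ (posB m))
          = M (σ (posA m0)) (σ (posB m0)) *
              ∏ m ∈ Finset.univ.erase m0, M (σ (posA m)) (σ (posB m)) :=
      fun σ => (Finset.mul_prod_erase Finset.univ _ (Finset.mem_univ m0)).symm
    rw [hf]
    simp only [hsign, hv_last, hsplit, heq]
    rcases Nat.mod_two_eq_zero_or_one r.val with hrmod | hrmod
    · have hA : posA m0 = r := by rw [Fin.ext_iff]; show 2*((m0:ℕ)) = _; rw [hm0v]; omega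
      have hB : posB m0 = p := by
        rw [Fin.ext_iff, hpval]; show 2*((m0:ℕ))+1 = _; rw [hm0v, if_pos hrmod]; omega
      rw [hA, hB, hv_other r (Ne.symm hpr) hrll, hv_p, hrl]
      ring
    · have hA : posA m0 = p := by
        rw [Fin.ext_iff, hpval]; show 2*((m0:ℕ)) = _; rw [hm0v, if_neg (by omega)]; omega
      have hB : posB m0 = r := by rw [Fin.ext_iff]; show 2*((m0:ℕ))+1 = _; rw [hm0v]; omega
      rw [hA, hB, hv_other r (Ne.symm hpr) hrll, hv_p, hrl,
        skew (π (Fin.last (2*n))) l, skew (π p) l]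
      ring
  refine Finset.sum_ninvolution (flip2 l) ?_ ?_ (fun a => Finset.mem_univ _) ?_
  · intro a
    show f a + f (flip2 l a) = 0
    by_cases h : a (Fin.last (2*n)) = l
    · rw [flip2, dif_pos h, hzero a h, add_zero]
    · rw [hneg a h, add_neg_cancel]
  · intro a hfa
    replace hfa : f a ≠ 0 := hfa
    by_cases h : a (Fin.last (2*n)) = l
    · exact absurd (hzero a h) hfa
    · rw [flip2_of_ne l a h]
      intro e
      have he2 := congrArg (fun σ : Equiv.Perm (Fin (2*n+1)) => σ (Fin.last (2*n))) e
      simp only [Equiv.Perm.mul_apply, Equiv.swap_apply_right] at he2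
      exact partnerPos_ne_last l a h (a.injective he2)
  · intro a
    by_cases h : a (Fin.last (2*n)) = l
    · simp [flip2, h]
    · exact flip2_flip2 l a h


lemma Phi_posA (i : Fin (2*n+1)) (τ : Equiv.Perm (Fin (2*n))) (m : Fin n) :
    Phi i τ (posA m) = Fin.succAbove i (τ ⟨2*(m : ℕ), by have := m.isLt; omega⟩) := by
  have h : posA m = Fin.castSucc ⟨2*(m:ℕ), by have := m.isLt; omega⟩ := by
    apply Fin.ext; simp [posA]
  rw [h, Phi_castSucc]

lemma Phi_posB (i : Fin (2*n+1)) (τ : Equiv.Perm (Fin (2*n))) (m : Fin n) :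
    Phi i τ (posB m) = Fin.succAbove i (τ ⟨2*(m : ℕ)+1, by have := m.isLt; omega⟩) := by
  have h : posB m = Fin.castSucc ⟨2*(m:ℕ)+1, by have := m.isLt; omega⟩ := by
    apply Fin.ext; simp [posB]
  rw [h, Phi_castSucc]

/-- For odd `k = 2n+1` and skew-symmetric `M`, the vector `a(M)` of signed
sub-Pfaffian sums lies in the kernel of `M`: `Σ_i M_{li} a_i = 0` for every `l`. -/
theorem casimirVec_mem_ker (n : ℕ) (hn : 1 ≤ n)
    (M : Matrix (Fin (2*n+1)) (Fin (2*n+1)) ℝ) (hM : Mᵀ = -M) :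
    M.mulVec (casimirVec n M) = 0 := by
  have skew : ∀ a b, M a b = - M b a := fun a b => by
    have := congrFun (congrFun hM b) a
    simpa [Matrix.transpose_apply, Matrix.neg_apply] using this
  funext l
  rw [Pi.zero_apply]
  show ∑ i, M l i * casimirVec n M i = 0
  set F : Equiv.Perm (Fin (2*n+1)) → ℝ := fun π =>
    ((Equiv.Perm.sign π : ℤ) : ℝ) *
      (M l (π (Fin.last (2*n))) * ∏ m : Fin n, M (π (posA m)) (π (posB m))) with hF
  have expand : ∀ i, M l i * casimirVec n M i
      = ∑ τ : Equiv.Perm (Fin (2*n)), -(F (Phi i τ)) := by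
    intro i
    rw [casimirVec, Finset.mul_sum, Finset.mul_sum]
    refine Finset.sum_congr rfl fun τ _ => ?_
    have hs : ((Equiv.Perm.sign (Phi i τ) : ℤ) : ℝ)
        = (-1 : ℝ)^(i:ℕ) * ((Equiv.Perm.sign τ : ℤ) : ℝ) := by
      rw [sign_Phi]; push_cast; ring
    have hP : ∏ m : Fin n, M (Phi i τ (posA m)) (Phi i τ (posB m))
        = ∏ m : Fin n,
            M (Fin.succAbove i (τ ⟨2*(m : ℕ), by have := m.isLt; omega⟩))
              (Fin.succAbove i (τ ⟨2*(m : ℕ)+1, by have := m.isLt; omega⟩)) :=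
      Finset.prod_congr rfl fun m _ => by
        rw [Phi_posA, Phi_posB]
    rw [hF]
    simp only [Phi_last, hP, hs, pow_succ]
    ring
  have step1 : ∑ i, M l i * casimirVec n M i
      = ∑ i, ∑ τ : Equiv.Perm (Fin (2*n)), -(F (Phi i τ)) :=
    Finset.sum_congr rfl fun i _ => expand i
  have step2 : ∑ i, ∑ τ : Equiv.Perm (Fin (2*n)), -(F (Phi i τ))
      = ∑ p : Fin (2*n+1) × Equiv.Perm (Fin (2*n)), -(F (Phi p.1 p.2)) :=
    (Fintype.sum_prod_type
      (fun p : Fin (2*n+1) × Equiv.Perm (Fin (2*n)) => -(F (Phi p.1 p.2)))).symm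
  have step3 : ∑ p : Fin (2*n+1) × Equiv.Perm (Fin (2*n)), -(F (Phi p.1 p.2))
      = ∑ π : Equiv.Perm (Fin (2*n+1)), -(F π) :=
    Fintype.sum_bijective
      (fun p : Fin (2*n+1) × Equiv.Perm (Fin (2*n)) => Phi p.1 p.2) Phi_bijective
      (fun p : Fin (2*n+1) × Equiv.Perm (Fin (2*n)) => -(F (Phi p.1 p.2)))
      (fun π : Equiv.Perm (Fin (2*n+1)) => -(F π)) (fun p => rfl)
  rw [step1, step2, step3, Finset.sum_neg_distrib, neg_eq_zero]
  exact key M skew l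
end

section
/- Let k = 2n+1 with n ≥ 1, let M be a real skew-symmetric k×k matrix, and let a = a(M) ∈ ℝ^k be the vector with components a_i = Σ (-1)^{σ+i} M_{j₁j₂} ⋯ M_{j_{2n-1}j_{2n}}, the sum being over all sequences (j₁,…,j_{2n}) in which each element of {1,…,k}\{i} appears exactly once, with σ the parity of (j₁,…,j_{2n}) as a permutation of {1,…,k}\{i} in increasing order. Let H : ℝ^k → ℝ be differentiable at every p ≠ 0, and let p : ℝ → ℝ^k be differentiable with p(t) ≠ 0 and p'(t) = -M ∇H(p(t)) for all t. Then the function t ↦ Σ_{i=1}^k a_i p_i(t) (the Casimir C evaluated along the trajectory) is constant on ℝ. -/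
open Matrix

/-- The gradient of `H : ℝ^k → ℝ` at `p`, i.e. the vector of partial derivatives. -/
noncomputable def grad {k : ℕ} (H : (Fin k → ℝ) → ℝ) (p : Fin k → ℝ) : Fin k → ℝ :=
  fun i => fderiv ℝ H p (Pi.single i 1)

namespace CasimirAux

open Equiv Finset

/-- position `2m` among the `2n` pair-slots. -/
def pos0 (n : ℕ) (m : Fin n) : Fin (2*n) := ⟨2*(m : ℕ), by have := m.isLt; omega⟩

/-- position `2m+1` among the `2n` pair-slots. -/
def pos1 (n : ℕ) (m : Fin n) : Fin (2*n) := ⟨2*(m : ℕ)+1, by have := m.isLt; omega⟩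

/-- the partner position in the same pair. -/
def partner (n : ℕ) (r : Fin (2*n)) : Fin (2*n) :=
  if h : (r : ℕ) % 2 = 0 then ⟨(r : ℕ)+1, by have := r.isLt; omega⟩
  else ⟨(r : ℕ)-1, by have := r.isLt; omega⟩

lemma partner_ne (n : ℕ) (r : Fin (2*n)) : partner n r ≠ r := by
  unfold partner
  split <;> (intro hcon; rw [Fin.ext_iff] at hcon; simp only [] at hcon; omega)

lemma pair_cases (n : ℕ) (r : Fin (2*n)) :
    ∃ m : Fin n, (r = pos0 n m ∧ partner n r = pos1 n m) ∨
      (r = pos1 n m ∧ partner n r = pos0 n m) := by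
  refine ⟨⟨(r : ℕ)/2, by have := r.isLt; omega⟩, ?_⟩
  unfold partner pos0 pos1
  by_cases h : (r : ℕ) % 2 = 0
  · left
    rw [dif_pos h]
    constructor <;> (apply Fin.ext; simp only []; omega)
  · right
    rw [dif_neg h]
    constructor <;> (apply Fin.ext; simp only []; omega)

/-- the auxiliary permutation of `Fin (2n+1)` used to build `kappa`. -/
def kgerm (n : ℕ) (u i : Fin (2*n+1)) : Equiv.Perm (Fin (2*n+1)) :=
  Fin.cycleRange u * Equiv.swap u i * (Fin.cycleRange i)⁻¹

/-- the permutation `κ` of `Fin (2n)` satisfying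
`u.succAbove (κ x) = swap u i (i.succAbove x)`. -/
def kappa (n : ℕ) (u i : Fin (2*n+1)) : Equiv.Perm (Fin (2*n)) :=
  (Equiv.Perm.decomposeFin (kgerm n u i)).2

lemma kgerm_zero (n : ℕ) (u i : Fin (2*n+1)) : kgerm n u i 0 = 0 := by
  unfold kgerm
  have h1 : (Fin.cycleRange i)⁻¹ 0 = i := by
    rw [← Fin.cycleRange_self i, Equiv.Perm.inv_eq_iff_eq.mpr rfl]
  rw [Equiv.Perm.mul_apply, Equiv.Perm.mul_apply, h1, Equiv.swap_apply_right,
    Fin.cycleRange_self]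

lemma decomposeFin_eq (n : ℕ) (u i : Fin (2*n+1)) :
    Equiv.Perm.decomposeFin.symm (0, kappa n u i) = kgerm n u i := by
  have h1 : (Equiv.Perm.decomposeFin (kgerm n u i)).1 = 0 := by
    calc (Equiv.Perm.decomposeFin (kgerm n u i)).1
        = Equiv.Perm.decomposeFin.symm
            ((Equiv.Perm.decomposeFin (kgerm n u i)).1,
             (Equiv.Perm.decomposeFin (kgerm n u i)).2) 0 :=
          (Equiv.Perm.decomposeFin_symm_apply_zero _ _).symm
      _ = kgerm n u i 0 := by
          rw [show ((Equiv.Perm.decomposeFin (kgerm n u i)).1,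
              (Equiv.Perm.decomposeFin (kgerm n u i)).2)
              = Equiv.Perm.decomposeFin (kgerm n u i) from rfl,
            Equiv.symm_apply_apply]
      _ = 0 := kgerm_zero n u i
  rw [Equiv.symm_apply_eq]
  exact Prod.ext h1.symm rfl

lemma kappa_spec (n : ℕ) (u i : Fin (2*n+1)) (x : Fin (2*n)) :
    Fin.succAbove u (kappa n u i x) = Equiv.swap u i (Fin.succAbove i x) := by
  have h1 : kgerm n u i x.succ = (kappa n u i x).succ := by
    rw [← decomposeFin_eq n u i, Equiv.Perm.decomposeFin_symm_apply_succ]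
    simp [Equiv.swap_self]
  have h2 : (Fin.cycleRange i)⁻¹ x.succ = Fin.succAbove i x := by
    rw [← Fin.cycleRange_succAbove i x, Equiv.Perm.inv_eq_iff_eq.mpr rfl]
  have h3 : Fin.cycleRange u (Equiv.swap u i (Fin.succAbove i x)) = (kappa n u i x).succ := by
    rw [← h1]; unfold kgerm
    rw [Equiv.Perm.mul_apply, Equiv.Perm.mul_apply, h2]
  rw [← Fin.cycleRange_succAbove u (kappa n u i x)] at h3
  exact (Equiv.injective _ h3).symm

lemma kappa_kappa (n : ℕ) (u i : Fin (2*n+1)) (x : Fin (2*n)) :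
    kappa n i u (kappa n u i x) = x := by
  apply Fin.succAbove_right_injective (p := i)
  rw [kappa_spec n i u, kappa_spec n u i, Equiv.swap_comm i u, Equiv.swap_apply_self]

lemma kappa_sign (n : ℕ) (u i : Fin (2*n+1)) (h : u ≠ i) :
    Equiv.Perm.sign (kappa n u i) = (-1 : ℤˣ) ^ ((u : ℕ) + (i : ℕ) + 1) := by
  have h1 := Equiv.Perm.decomposeFin.symm_sign (0 : Fin (2*n+1)) (kappa n u i)
  rw [decomposeFin_eq n u i, if_pos rfl, one_mul] at h1
  rw [← h1]
  unfold kgerm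
  rw [_root_.map_mul, _root_.map_mul, _root_.map_inv, Fin.sign_cycleRange,
    Fin.sign_cycleRange, Equiv.Perm.sign_swap h]
  have h2 : ((-1 : ℤˣ) ^ ((i : ℕ)))⁻¹ = (-1 : ℤˣ) ^ ((i : ℕ)) := by
    rw [← inv_pow]; norm_num
  rw [h2, pow_add, pow_add, pow_one]
  rw [mul_right_comm]

/-- the summand of the expanded Casimir-kernel sum. -/
noncomputable def term (n : ℕ) (M : Matrix (Fin (2*n+1)) (Fin (2*n+1)) ℝ) (j : Fin (2*n+1))
    (a : Fin (2*n+1) × Equiv.Perm (Fin (2*n))) : ℝ :=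
  (-1 : ℝ) ^ ((a.1 : ℕ) + 1) * ((Equiv.Perm.sign a.2 : ℤ) : ℝ) *
    (∏ m : Fin n, M (Fin.succAbove a.1 (a.2 (pos0 n m))) (Fin.succAbove a.1 (a.2 (pos1 n m)))) *
    M a.1 j

/-- the sign-reversing involution. -/
noncomputable def theta (n : ℕ) (j : Fin (2*n+1))
    (a : Fin (2*n+1) × Equiv.Perm (Fin (2*n))) (h : a.1 ≠ j) :
    Fin (2*n+1) × Equiv.Perm (Fin (2*n)) :=
  let y := (Fin.exists_succAbove_eq (Ne.symm h)).choose
  let u := Fin.succAbove a.1 (a.2 (partner n (a.2⁻¹ y)))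
  (u, kappa n u a.1 * a.2)

theorem theta_main {n : ℕ} (M : Matrix (Fin (2*n+1)) (Fin (2*n+1)) ℝ)
    (hM : ∀ a b, M b a = -M a b) (j : Fin (2*n+1))
    (a : Fin (2*n+1) × Equiv.Perm (Fin (2*n))) (h : a.1 ≠ j) :
    term n M j (theta n j a h) = - term n M j a ∧ (theta n j a h).1 ≠ j ∧
      (theta n j a h).1 ≠ a.1 ∧ ∀ h2, theta n j (theta n j a h) h2 = a := by
  obtain ⟨i, τ⟩ := a
  have hy : Fin.succAbove i (Fin.exists_succAbove_eq (Ne.symm h)).choose = j :=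
    (Fin.exists_succAbove_eq (Ne.symm h)).choose_spec
  set y := (Fin.exists_succAbove_eq (Ne.symm h)).choose with hy_def
  set r := τ⁻¹ y with hr_def
  set rp := partner n r with hrp_def
  set u := Fin.succAbove i (τ rp) with hu_def
  have hθ : theta n j (i, τ) h = (u, kappa n u i * τ) := rfl
  have hτr : τ r = y := by rw [hr_def]; exact Equiv.Perm.eq_inv_iff_eq.mp rfl
  have hui : u ≠ i := Fin.succAbove_ne i _
  have hij' : i ≠ j := h
  have hji : j ≠ i := Ne.symm h
  have hrpr : rp ≠ r := partner_ne n r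
  have huj : u ≠ j := by
    rw [hu_def, ← hy]
    intro hc
    have := Fin.succAbove_right_injective (p := i) hc
    rw [← hτr] at this
    exact hrpr (τ.injective this)
  have hju : j ≠ u := Ne.symm huj
  have hD : ∀ x, Fin.succAbove u ((kappa n u i * τ) x)
      = Equiv.swap u i (Fin.succAbove i (τ x)) := fun x => kappa_spec n u i (τ x)
  have hfix : ∀ x, x ≠ rp →
      Equiv.swap u i (Fin.succAbove i (τ x)) = Fin.succAbove i (τ x) := by
    intro x hx
    apply Equiv.swap_apply_of_ne_of_ne
    · intro hc
      rw [hu_def] at hc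
      exact hx (τ.injective (Fin.succAbove_right_injective (p := i) hc))
    · exact Fin.succAbove_ne i (τ x)
  have hswap_rp : Equiv.swap u i (Fin.succAbove i (τ rp)) = i := by
    rw [← hu_def]; exact Equiv.swap_apply_left u i
  have hswap_r : Equiv.swap u i (Fin.succAbove i (τ r)) = j := by
    rw [hτr, hy]; exact Equiv.swap_apply_of_ne_of_ne hju hji
  obtain ⟨mr, hmr⟩ := pair_cases n r
  rw [← hrp_def] at hmr
  -- product times external factor identity
  have hproduct : (∏ m : Fin n, M (Fin.succAbove u ((kappa n u i * τ) (pos0 n m)))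
        (Fin.succAbove u ((kappa n u i * τ) (pos1 n m)))) * M u j
      = (∏ m : Fin n, M (Fin.succAbove i (τ (pos0 n m)))
        (Fin.succAbove i (τ (pos1 n m)))) * M i j := by
    rw [← Finset.mul_prod_erase Finset.univ
      (fun m => M (Fin.succAbove u ((kappa n u i * τ) (pos0 n m)))
        (Fin.succAbove u ((kappa n u i * τ) (pos1 n m)))) (Finset.mem_univ mr),
      ← Finset.mul_prod_erase Finset.univ
      (fun m => M (Fin.succAbove i (τ (pos0 n m)))
        (Fin.succAbove i (τ (pos1 n m)))) (Finset.mem_univ mr)]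
    have herase : ∏ m ∈ Finset.univ.erase mr,
        M (Fin.succAbove u ((kappa n u i * τ) (pos0 n m)))
          (Fin.succAbove u ((kappa n u i * τ) (pos1 n m)))
        = ∏ m ∈ Finset.univ.erase mr,
        M (Fin.succAbove i (τ (pos0 n m))) (Fin.succAbove i (τ (pos1 n m))) := by
      apply Finset.prod_congr rfl
      intro m hm
      have hm' : (m : ℕ) ≠ (mr : ℕ) :=
        fun hc => (Finset.ne_of_mem_erase hm) (Fin.ext hc)
      have h0 : pos0 n m ≠ rp := by
        rcases hmr with ⟨_, hrp⟩ | ⟨_, hrp⟩ <;> rw [hrp] <;>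
          (intro hc; rw [Fin.ext_iff] at hc; simp only [pos0, pos1] at hc; omega)
      have h1 : pos1 n m ≠ rp := by
        rcases hmr with ⟨_, hrp⟩ | ⟨_, hrp⟩ <;> rw [hrp] <;>
          (intro hc; rw [Fin.ext_iff] at hc; simp only [pos0, pos1] at hc; omega)
      rw [hD, hD, hfix _ h0, hfix _ h1]
    rw [herase]
    rcases hmr with ⟨hr0, hrp1⟩ | ⟨hr1, hrp0⟩
    · -- r = pos0 mr, rp = pos1 mr
      have hfac : M (Fin.succAbove u ((kappa n u i * τ) (pos0 n mr)))
            (Fin.succAbove u ((kappa n u i * τ) (pos1 n mr))) * M u j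
          = M (Fin.succAbove i (τ (pos0 n mr))) (Fin.succAbove i (τ (pos1 n mr))) * M i j := by
        rw [hD, hD, ← hr0, ← hrp1, hswap_r, hswap_rp, hτr, hy, ← hu_def]
        rw [hM i j, hM u j]
        ring
      rw [mul_right_comm, hfac, mul_right_comm]
    · -- r = pos1 mr, rp = pos0 mr
      have hfac : M (Fin.succAbove u ((kappa n u i * τ) (pos0 n mr)))
            (Fin.succAbove u ((kappa n u i * τ) (pos1 n mr))) * M u j
          = M (Fin.succAbove i (τ (pos0 n mr))) (Fin.succAbove i (τ (pos1 n mr))) * M i j := by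
        rw [hD, hD, ← hr1, ← hrp0, hswap_r, hswap_rp, hτr, hy, ← hu_def]
        ring
      rw [mul_right_comm, hfac, mul_right_comm]
  refine ⟨?_, huj, hui, ?_⟩
  · -- term flips sign
    rw [hθ]
    unfold term
    simp only []
    have hsign : ((Equiv.Perm.sign (kappa n u i * τ) : ℤ) : ℝ)
        = (-1 : ℝ) ^ ((u : ℕ) + (i : ℕ) + 1) * ((Equiv.Perm.sign τ : ℤ) : ℝ) := by
      rw [_root_.map_mul, kappa_sign n u i hui]
      push_cast [pow_succ]
      ring
    rw [hsign]
    have hpow : (-1 : ℝ) ^ ((u : ℕ) + 1) * (-1 : ℝ) ^ ((u : ℕ) + (i : ℕ) + 1)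
        = -(-1 : ℝ) ^ ((i : ℕ) + 1) := by
      rw [← pow_add]
      rw [show ((u : ℕ) + 1) + ((u : ℕ) + (i : ℕ) + 1) = 2*((u : ℕ)+1) + (i : ℕ) by ring]
      rw [pow_add, pow_mul, pow_add]
      norm_num
      rw [pow_succ]
      ring
    rw [mul_assoc ((-1 : ℝ) ^ ((u : ℕ) + 1) * _) _ (M u j)]
    rw [hproduct]
    rw [mul_assoc ((-1 : ℝ) ^ ((i : ℕ) + 1) * _) _ (M i j)]
    linear_combination (((Equiv.Perm.sign τ : ℤ) : ℝ) *
      ((∏ m : Fin n, M (Fin.succAbove i (τ (pos0 n m))) (Fin.succAbove i (τ (pos1 n m)))) *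
        M i j)) * hpow
  · -- involution
    intro h2
    have huj2 : ((u, kappa n u i * τ) :
        Fin (2*n+1) × Equiv.Perm (Fin (2*n))).1 ≠ j := huj
    have hgoal : theta n j (u, kappa n u i * τ) huj2 = (i, τ) := by
      have hy2 : Fin.succAbove u (Fin.exists_succAbove_eq (Ne.symm huj2)).choose = j :=
        (Fin.exists_succAbove_eq (Ne.symm huj2)).choose_spec
      have hy2' : (Fin.exists_succAbove_eq (Ne.symm huj2)).choose = kappa n u i y := by
        apply Fin.succAbove_right_injective (p := u)
        rw [hy2, kappa_spec n u i y, hy]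
        exact (Equiv.swap_apply_of_ne_of_ne hju hji).symm
      have hr2 : (kappa n u i * τ)⁻¹ ((Fin.exists_succAbove_eq (Ne.symm huj2)).choose) = r := by
        rw [hy2', hr_def, _root_.mul_inv_rev, Equiv.Perm.mul_apply, Equiv.Perm.inv_eq_iff_eq.mpr rfl]
      have hU : Fin.succAbove u ((kappa n u i * τ) rp) = i := by
        rw [hD rp, hswap_rp]
      show (Fin.succAbove u ((kappa n u i * τ) (partner n
          ((kappa n u i * τ)⁻¹ (Fin.exists_succAbove_eq (Ne.symm huj2)).choose))),
        kappa n (Fin.succAbove u ((kappa n u i * τ) (partner n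
          ((kappa n u i * τ)⁻¹ (Fin.exists_succAbove_eq (Ne.symm huj2)).choose)))) u *
          (kappa n u i * τ)) = (i, τ)
      rw [hr2, ← hrp_def, hU]
      refine Prod.ext rfl ?_
      show kappa n i u * (kappa n u i * τ) = τ
      ext x
      simp only [Equiv.Perm.mul_apply]
      rw [kappa_kappa]
    exact hgoal
  
theorem key {n : ℕ} (M : Matrix (Fin (2*n+1)) (Fin (2*n+1)) ℝ) (hM : Mᵀ = -M)
    (j : Fin (2*n+1)) : ∑ i, casimirVec n M i * M i j = 0 := by
  classical
  have hsk : ∀ a b : Fin (2*n+1), M b a = -M a b := by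
    intro a b
    have h := congrFun (congrFun hM a) b
    simpa [Matrix.transpose_apply, Matrix.neg_apply] using h
  have hjj : M j j = 0 := by have := hsk j j; linarith
  have h1 : ∑ i, casimirVec n M i * M i j
      = ∑ a : Fin (2*n+1) × Equiv.Perm (Fin (2*n)), term n M j a := by
    rw [Fintype.sum_prod_type]
    apply Finset.sum_congr rfl
    intro i _
    unfold casimirVec term pos0 pos1
    rw [Finset.mul_sum, Finset.sum_mul]
    apply Finset.sum_congr rfl
    intro τ _
    ring
  rw [h1]
  have hfilter : ∀ x ∈ (Finset.univ : Finset (Fin (2*n+1) × Equiv.Perm (Fin (2*n)))),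
      term n M j x ≠ 0 → x.1 ≠ j := by
    intro x _ hx hxj
    apply hx
    unfold term
    rw [hxj, hjj, mul_zero]
  rw [← Finset.sum_filter_of_ne hfilter]
  apply Finset.sum_involution
    (g := fun a ha => theta n j a (Finset.mem_filter.mp ha).2)
  · intro a ha
    have h := (theta_main M hsk j a (Finset.mem_filter.mp ha).2).1
    rw [h]; ring
  · intro a ha _
    intro hc
    exact (theta_main M hsk j a (Finset.mem_filter.mp ha).2).2.2.1 (by rw [hc])
  · intro a ha
    exact (theta_main M hsk j a (Finset.mem_filter.mp ha).2).2.2.2 _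
  · intro a ha
    exact Finset.mem_filter.mpr ⟨Finset.mem_univ _,
      (theta_main M hsk j a (Finset.mem_filter.mp ha).2).2.1⟩

end CasimirAux

/-- For odd `k = 2n+1`, the Casimir `C(p) = Σ_i a_i(M) p_i` is constant along any
solution of `p' = -M ∇H(p)` avoiding the origin. -/
theorem casimir_constant (n : ℕ) (hn : 1 ≤ n)
    (M : Matrix (Fin (2*n+1)) (Fin (2*n+1)) ℝ) (hM : Mᵀ = -M)
    (H : (Fin (2*n+1) → ℝ) → ℝ)
    (hH : ∀ p : Fin (2*n+1) → ℝ, p ≠ 0 → DifferentiableAt ℝ H p)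
    (p : ℝ → Fin (2*n+1) → ℝ)
    (hp0 : ∀ t : ℝ, p t ≠ 0)
    (hp : ∀ t : ℝ, HasDerivAt p (-(M.mulVec (grad H (p t)))) t) :
    ∀ s t : ℝ, ∑ i, casimirVec n M i * p s i = ∑ i, casimirVec n M i * p t i := by
  have hderiv : ∀ x : ℝ,
      HasDerivAt (fun r => ∑ i, casimirVec n M i * p r i) 0 x := by
    intro x
    set w := grad H (p x) with hw
    have hv : ∀ i, HasDerivAt (fun r => p r i) ((-(M.mulVec w)) i) x :=
      fun i => hasDerivAt_pi.mp (hp x) i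
    have hsum : HasDerivAt (fun r => ∑ i, casimirVec n M i * p r i)
        (∑ i, casimirVec n M i * (-(M.mulVec w)) i) x :=
      HasDerivAt.fun_sum fun i _ => (hv i).const_mul _
    have h0 : ∑ i, casimirVec n M i * (-(M.mulVec w)) i = 0 := by
      have expand : ∀ i, casimirVec n M i * (-(M.mulVec w)) i
          = ∑ j, -(casimirVec n M i * M i j * w j) := by
        intro i
        have hmv : (M.mulVec w) i = ∑ j, M i j * w j := by
          simp [Matrix.mulVec, dotProduct]
        rw [Pi.neg_apply, hmv, mul_neg, Finset.mul_sum, ← Finset.sum_neg_distrib]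
        apply Finset.sum_congr rfl
        intro j _
        ring
      calc ∑ i, casimirVec n M i * (-(M.mulVec w)) i
          = ∑ i, ∑ j, -(casimirVec n M i * M i j * w j) := by
            exact Finset.sum_congr rfl fun i _ => expand i
        _ = ∑ j, ∑ i, -(casimirVec n M i * M i j * w j) := Finset.sum_comm
        _ = ∑ j : Fin (2*n+1), -((∑ i, casimirVec n M i * M i j) * w j) := by
            apply Finset.sum_congr rfl
            intro j _
            rw [Finset.sum_mul, ← Finset.sum_neg_distrib]
        _ = 0 := by
            apply Finset.sum_eq_zero
            intro j _
            rw [CasimirAux.key M hM j, zero_mul, neg_zero]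
    rw [← h0]
    exact hsum
  intro s t
  have hdiff : Differentiable ℝ (fun r => ∑ i, casimirVec n M i * p r i) :=
    fun x => (hderiv x).differentiableAt
  have hd0 : ∀ x, deriv (fun r => ∑ i, casimirVec n M i * p r i) x = 0 :=
    fun x => (hderiv x).deriv
  exact is_const_of_deriv_eq_zero hdiff hd0 s t
end

section
/- Let k ≥ 2, let U ⊆ ℝ^k be a compact, strictly convex set containing the origin in its interior, and let H(p) = max_{v ∈ U} ⟨v, p⟩ be its support function; assume H is differentiable at every p ≠ 0. Let M be a real skew-symmetric k×k matrix, and let p : ℝ → ℝ^k be a differentiable curve with p(t) ≠ 0 and p'(t) = -M ∇H(p(t)) for all t, satisfying H(p(0)) = 1 and ∇H(p(0)) ∈ ker M. Then p is constant: p(t) = p(0) for all t ∈ ℝ. -/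
open Matrix

noncomputable def lf {k : ℕ} (v : Fin k → ℝ) : (Fin k → ℝ) →L[ℝ] ℝ :=
  ∑ i, (v i) • (ContinuousLinearMap.proj i : (Fin k → ℝ) →L[ℝ] ℝ)

lemma lf_apply {k : ℕ} (v q : Fin k → ℝ) : lf v q = ∑ i, v i * q i := by
  simp [lf, ContinuousLinearMap.sum_apply, smul_eq_mul]

lemma lf_single {k : ℕ} (v : Fin k → ℝ) (i : Fin k) : lf v (Pi.single i 1) = v i := by
  rw [lf_apply]
  rw [Finset.sum_eq_single i]
  · simp
  · intro j _ hj; simp [Pi.single_apply, hj]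
  · simp

lemma grad_max {k : ℕ} (U : Set (Fin k → ℝ)) (H : (Fin k → ℝ) → ℝ)
    (hH : ∀ p : Fin k → ℝ, IsGreatest ((fun v => ∑ i, v i * p i) '' U) (H p))
    (p : Fin k → ℝ) (hd : DifferentiableAt ℝ H p) :
    grad H p ∈ U ∧ fderiv ℝ H p = lf (grad H p) ∧ ∑ i, grad H p i * p i = H p := by
  obtain ⟨v, hvU, hvp⟩ := (hH p).1
  have hmin : IsLocalMin (fun q => H q - lf v q) p := by
    apply Filter.Eventually.of_forall
    intro q
    have h1 : lf v q ≤ H q := by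
      rw [lf_apply]; exact (hH q).2 ⟨v, hvU, rfl⟩
    have h2 : lf v p = H p := by rw [lf_apply]; exact hvp
    simp only [h2, sub_self]
    linarith
  have hder : HasFDerivAt (fun q => H q - lf v q) (fderiv ℝ H p - lf v) p :=
    hd.hasFDerivAt.sub (lf v).hasFDerivAt
  have hz : fderiv ℝ H p - lf v = 0 := hmin.hasFDerivAt_eq_zero hder
  have hfd : fderiv ℝ H p = lf v := sub_eq_zero.mp hz
  have hg : grad H p = v := by
    funext i
    show fderiv ℝ H p (Pi.single i 1) = v i
    rw [hfd, lf_single]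
  rw [hg]
  exact ⟨hvU, hfd, hvp⟩

lemma skew_self {k : ℕ} (M : Matrix (Fin k) (Fin k) ℝ) (hM : Mᵀ = -M)
    (x : Fin k → ℝ) : ∑ i, x i * (M.mulVec x) i = 0 := by
  have h : x ⬝ᵥ M.mulVec x = (Mᵀ.mulVec x) ⬝ᵥ x := by
    rw [Matrix.mulVec_transpose, Matrix.dotProduct_mulVec]
  have h2 : x ⬝ᵥ M.mulVec x = -(M.mulVec x ⬝ᵥ x) := by
    rw [h, hM]; simp [Matrix.neg_mulVec]
  have h3 : M.mulVec x ⬝ᵥ x = x ⬝ᵥ M.mulVec x := dotProduct_comm _ _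
  have : x ⬝ᵥ M.mulVec x = 0 := by rw [h3] at h2; linarith
  simpa [dotProduct] using this

lemma skew_ker {k : ℕ} (M : Matrix (Fin k) (Fin k) ℝ) (hM : Mᵀ = -M)
    (w y : Fin k → ℝ) (hw : M.mulVec w = 0) : ∑ i, w i * (M.mulVec y) i = 0 := by
  have h : w ⬝ᵥ M.mulVec y = (Mᵀ.mulVec w) ⬝ᵥ y := by
    rw [Matrix.mulVec_transpose, Matrix.dotProduct_mulVec]
  have : w ⬝ᵥ M.mulVec y = 0 := by
    rw [h, hM, Matrix.neg_mulVec, hw]; simp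
  simpa [dotProduct] using this

/-- Part (1) of the main theorem: if the gradient of the maximized Hamiltonian at the
initial covector lies in the kernel of the skew-symmetric matrix `M`, then the solution
of `p' = -M ∇H(p)` with `H(p(0)) = 1` is constant. -/
theorem solution_constant_of_grad_in_ker (k : ℕ) (hk : 2 ≤ k)
    (U : Set (Fin k → ℝ)) (hUc : IsCompact U) (hUconv : StrictConvex ℝ U)
    (hU0 : (0 : Fin k → ℝ) ∈ interior U)
    (H : (Fin k → ℝ) → ℝ)
    (hH : ∀ p : Fin k → ℝ, IsGreatest ((fun v => ∑ i, v i * p i) '' U) (H p))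
    (hHdiff : ∀ p : Fin k → ℝ, p ≠ 0 → DifferentiableAt ℝ H p)
    (M : Matrix (Fin k) (Fin k) ℝ) (hM : Mᵀ = -M)
    (p : ℝ → Fin k → ℝ)
    (hp0 : ∀ t : ℝ, p t ≠ 0)
    (hp : ∀ t : ℝ, HasDerivAt p (-(M.mulVec (grad H (p t)))) t)
    (hH1 : H (p 0) = 1)
    (hker : M.mulVec (grad H (p 0)) = 0) :
    ∀ t : ℝ, p t = p 0 := by
  set w := grad H (p 0) with hw
  have hGM : ∀ t : ℝ, grad H (p t) ∈ U ∧ fderiv ℝ H (p t) = lf (grad H (p t)) ∧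
      ∑ i, grad H (p t) i * p t i = H (p t) :=
    fun t => grad_max U H hH (p t) (hHdiff _ (hp0 t))
  -- H is constant along the trajectory
  have hF : ∀ t : ℝ, HasDerivAt (fun s => H (p s)) 0 t := by
    intro t
    have h1 := ((hHdiff (p t) (hp0 t)).hasFDerivAt).comp_hasDerivAt t (hp t)
    have h2 : (fderiv ℝ H (p t)) (-(M.mulVec (grad H (p t)))) = 0 := by
      rw [(hGM t).2.1, map_neg, lf_apply, skew_self M hM, neg_zero]
    rw [h2] at h1
    exact h1
  have hHc : ∀ t : ℝ, H (p t) = 1 := by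
    intro t
    have := is_const_of_deriv_eq_zero (fun s => (hF s).differentiableAt)
      (fun s => (hF s).deriv) t 0
    rw [this, hH1]
  -- ⟨w, p t⟩ is constant
  have hG : ∀ t : ℝ, HasDerivAt (fun s => lf w (p s)) 0 t := by
    intro t
    have h1 := ((lf w).hasFDerivAt).comp_hasDerivAt t (hp t)
    have h2 : lf w (-(M.mulVec (grad H (p t)))) = 0 := by
      rw [map_neg, lf_apply, skew_ker M hM w _ hker, neg_zero]
    rw [h2] at h1
    exact h1
  have hGc : ∀ t : ℝ, ∑ i, w i * p t i = 1 := by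
    intro t
    have h0 : lf w (p 0) = 1 := by rw [lf_apply, (hGM 0).2.2, hH1]
    have := is_const_of_deriv_eq_zero (fun s => (hG s).differentiableAt)
      (fun s => (hG s).deriv) t 0
    rw [← lf_apply, this, h0]
  -- uniqueness of the maximizer: grad H (p t) = w
  have hgw : ∀ t : ℝ, grad H (p t) = w := by
    intro t
    by_contra hne
    have hgU : grad H (p t) ∈ U := (hGM t).1
    have hwU : w ∈ U := (hGM 0).1
    have hm : (1/2 : ℝ) • grad H (p t) + (1/2 : ℝ) • w ∈ interior U :=
      hUconv hgU hwU hne (by norm_num) (by norm_num) (by norm_num)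
    set m := (1/2 : ℝ) • grad H (p t) + (1/2 : ℝ) • w with hmdef
    obtain ⟨ε, hε, hball⟩ := Metric.mem_nhds_iff.mp (mem_interior_iff_mem_nhds.mp hm)
    have hpn : (0:ℝ) < ‖p t‖ := norm_pos_iff.mpr (hp0 t)
    set c : ℝ := ε / (2 * ‖p t‖) with hc
    have hcpos : 0 < c := div_pos hε (by positivity)
    have hm' : m + c • p t ∈ U := by
      apply hball
      rw [Metric.mem_ball, dist_eq_norm]
      have : m + c • p t - m = c • p t := add_sub_cancel_left m _
      rw [this, norm_smul, Real.norm_eq_abs, abs_of_pos hcpos]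
      rw [hc]
      rw [div_mul_eq_mul_div]
      rw [div_lt_iff₀ (by positivity)]
      nlinarith
    have hle : ∑ i, (m + c • p t) i * p t i ≤ 1 := by
      rw [← hHc t]
      exact (hH (p t)).2 ⟨m + c • p t, hm', rfl⟩
    have hS : 0 < ∑ i, p t i * p t i := by
      obtain ⟨i, hi⟩ := Function.ne_iff.mp (hp0 t)
      refine Finset.sum_pos' (fun j _ => mul_self_nonneg _)
        ⟨i, Finset.mem_univ i, mul_self_pos.mpr (by simpa using hi)⟩
    have hmsum : ∑ i, m i * p t i = 1 := by
      have h1 := (hGM t).2.2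
      rw [hHc t] at h1
      have h2 := hGc t
      have heq : ∑ i, m i * p t i =
          (1/2) * (∑ i, grad H (p t) i * p t i) + (1/2) * (∑ i, w i * p t i) := by
        rw [Finset.mul_sum, Finset.mul_sum, ← Finset.sum_add_distrib]
        apply Finset.sum_congr rfl
        intro i _
        simp only [hmdef, Pi.add_apply, Pi.smul_apply, smul_eq_mul]
        ring
      rw [heq, h1, h2]; norm_num
    have hexp : ∑ i, (m + c • p t) i * p t i = 1 + c * ∑ i, p t i * p t i := by
      simp only [Pi.add_apply, Pi.smul_apply, smul_eq_mul, add_mul]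
      rw [Finset.sum_add_distrib, hmsum, Finset.mul_sum]
      congr 1
      exact Finset.sum_congr rfl (fun i _ => by ring)
    rw [hexp] at hle
    nlinarith
  -- conclude
  intro t
  have hzero : ∀ s : ℝ, HasDerivAt p 0 s := by
    intro s
    have := hp s
    rw [hgw s, hker, neg_zero] at this
    exact this
  exact is_const_of_deriv_eq_zero (fun s => (hzero s).differentiableAt)
    (fun s => (hzero s).deriv) t 0
end

section
/- Let k ≥ 2, let U ⊆ ℝ^k be a compact, strictly convex set containing the origin in its interior, and let H(p) = max_{v ∈ U} ⟨v, p⟩ be its support function; assume H is differentiable at every p ≠ 0. Let M be a real skew-symmetric k×k matrix with rank M = 2, and let p : ℝ → ℝ^k be a differentiable curve with p(t) ≠ 0 and p'(t) = -M ∇H(p(t)) for all t, satisfying H(p(0)) = 1 and ∇H(p(0)) ∉ ker M. Then p'(t) ≠ 0 for all t ∈ ℝ, and p is periodic: there exists T > 0 such that p(t + T) = p(t) for all t ∈ ℝ. -/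
open Matrix Set Filter Topology

namespace SP

variable {k : ℕ} {U : Set (Fin k → ℝ)} {H : (Fin k → ℝ) → ℝ}

lemma fderiv_eq_dot (H : (Fin k → ℝ) → ℝ) (p v : Fin k → ℝ) :
    (fderiv ℝ H p) v = grad H p ⬝ᵥ v := by
  have hv : v = ∑ i, (v i) • (Pi.single i (1:ℝ) : Fin k → ℝ) := by
    ext j
    simp [Finset.sum_apply, Pi.single_apply]
  calc (fderiv ℝ H p) v = (fderiv ℝ H p) (∑ i, (v i) • (Pi.single i (1:ℝ) : Fin k → ℝ)) := by
        rw [← hv]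
    _ = ∑ i, (v i) * (fderiv ℝ H p) (Pi.single i (1:ℝ)) := by
        rw [map_sum]; simp [smul_eq_mul]
    _ = grad H p ⬝ᵥ v := by
        simp [dotProduct, grad, mul_comm]

lemma skew_dot {M : Matrix (Fin k) (Fin k) ℝ} (hM : Mᵀ = -M) (v u : Fin k → ℝ) :
    M.mulVec v ⬝ᵥ u = -(v ⬝ᵥ M.mulVec u) := by
  rw [dotProduct_comm, Matrix.dotProduct_mulVec]
  have : u ᵥ* M = -(M.mulVec u) := by
    rw [← Matrix.mulVec_transpose, hM, Matrix.neg_mulVec]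
  rw [this, neg_dotProduct, dotProduct_comm]


lemma dot_le_H (hH : ∀ p : Fin k → ℝ, IsGreatest ((fun v => ∑ i, v i * p i) '' U) (H p))
    {v : Fin k → ℝ} (hv : v ∈ U) (q : Fin k → ℝ) : v ⬝ᵥ q ≤ H q :=
  (hH q).2 ⟨v, hv, rfl⟩

lemma exists_max (hH : ∀ p : Fin k → ℝ, IsGreatest ((fun v => ∑ i, v i * p i) '' U) (H p))
    (q : Fin k → ℝ) : ∃ v ∈ U, v ⬝ᵥ q = H q := by
  obtain ⟨v, hv, hveq⟩ := (hH q).1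
  exact ⟨v, hv, hveq⟩

lemma H_zero (hH : ∀ p : Fin k → ℝ, IsGreatest ((fun v => ∑ i, v i * p i) '' U) (H p)) :
    H 0 = 0 := by
  obtain ⟨v, hv, hveq⟩ := (hH 0).1
  simp only [Pi.zero_apply, mul_zero, Finset.sum_const_zero] at hveq
  exact hveq.symm

lemma dot_self_nonneg (q : Fin k → ℝ) : 0 ≤ q ⬝ᵥ q :=
  Finset.sum_nonneg fun i _ => mul_self_nonneg _

lemma dot_self_pos {q : Fin k → ℝ} (hq : q ≠ 0) : 0 < q ⬝ᵥ q := by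
  rcases (dot_self_nonneg q).lt_or_eq with h | h
  · exact h
  · exfalso; apply hq
    ext i
    have := (Finset.sum_eq_zero_iff_of_nonneg (fun i _ => mul_self_nonneg (q i))).1 h.symm
    have hi := this i (Finset.mem_univ i)
    exact mul_self_eq_zero.1 hi

lemma H_convex (hH : ∀ p : Fin k → ℝ, IsGreatest ((fun v => ∑ i, v i * p i) '' U) (H p)) :
    ConvexOn ℝ univ H := by
  refine ⟨convex_univ, fun p _ q _ a b ha hb hab => ?_⟩
  obtain ⟨v, hv, hveq⟩ := exists_max hH (a • p + b • q)
  rw [← hveq]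
  have : v ⬝ᵥ (a • p + b • q) = a * (v ⬝ᵥ p) + b * (v ⬝ᵥ q) := by
    simp [dotProduct, Finset.mul_sum, Finset.sum_add_distrib, mul_add,
      mul_left_comm, mul_comm]
  rw [this]
  have h1 := dot_le_H hH hv p
  have h2 := dot_le_H hH hv q
  have := add_le_add (mul_le_mul_of_nonneg_left h1 ha) (mul_le_mul_of_nonneg_left h2 hb)
  simpa [smul_eq_mul] using this

lemma H_cont (hUc : IsCompact U)
    (hH : ∀ p : Fin k → ℝ, IsGreatest ((fun v => ∑ i, v i * p i) '' U) (H p)) :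
    Continuous H := by
  obtain ⟨C, hC⟩ : ∃ C, ∀ v ∈ U, ‖v‖ ≤ C := hUc.isBounded.exists_norm_le
  have key : ∀ p q : Fin k → ℝ, H p - H q ≤ (k * C) * ‖p - q‖ := by
    intro p q
    obtain ⟨v, hv, hveq⟩ := exists_max hH p
    have h1 : v ⬝ᵥ p = v ⬝ᵥ q + v ⬝ᵥ (p - q) := by
      rw [← dotProduct_add]
      congr 1; ext i; simp
    have h2 : v ⬝ᵥ (p - q) ≤ (k * C) * ‖p - q‖ := by
      calc v ⬝ᵥ (p - q) ≤ |v ⬝ᵥ (p - q)| := le_abs_self _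
        _ ≤ ∑ i, |v i * (p - q) i| := Finset.abs_sum_le_sum_abs _ _
        _ ≤ ∑ _i : Fin k, C * ‖p - q‖ := by
            refine Finset.sum_le_sum fun i _ => ?_
            rw [abs_mul]
            have hvi : |v i| ≤ C := le_trans (norm_le_pi_norm v i) (hC v hv)
            have hpi : |(p - q) i| ≤ ‖p - q‖ := norm_le_pi_norm (p - q) i
            exact mul_le_mul hvi hpi (abs_nonneg _) (le_trans (abs_nonneg _) hvi)
        _ = (k * C) * ‖p - q‖ := by simp [Finset.sum_const, Finset.card_univ]; ring
    have h3 := dot_le_H hH hv q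
    linarith [hveq.symm.le]
  have habs : ∀ p q : Fin k → ℝ, dist (H p) (H q) ≤ (k * C) * dist p q := by
    intro p q
    rw [Real.dist_eq, dist_eq_norm]
    rcases abs_cases (H p - H q) with ⟨h, _⟩ | ⟨h, _⟩
    · rw [h]; exact key p q
    · rw [h]
      have := key q p
      rw [show q - p = -(p - q) by ring, norm_neg] at this
      linarith
  refine LipschitzWith.continuous (K := Real.toNNReal (k * C)) ?_
  refine LipschitzWith.of_dist_le' ?_
  intro p q
  refine le_trans (habs p q) ?_
  have h1 : (k * C : ℝ) ≤ ((k * C : ℝ).toNNReal : ℝ) := Real.le_coe_toNNReal _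
  have h2 : (0:ℝ) ≤ dist p q := dist_nonneg
  nlinarith

lemma H_coercive (hU0 : (0 : Fin k → ℝ) ∈ interior U)
    (hH : ∀ p : Fin k → ℝ, IsGreatest ((fun v => ∑ i, v i * p i) '' U) (H p)) :
    ∃ s : ℝ, 0 < s ∧ ∀ q : Fin k → ℝ, s * Real.sqrt (q ⬝ᵥ q) ≤ H q := by
  obtain ⟨ε, hε, hball⟩ := Metric.isOpen_iff.1 isOpen_interior 0 hU0
  refine ⟨ε / 2, by linarith, fun q => ?_⟩
  rcases eq_or_ne q 0 with rfl | hq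
  · simp [H_zero hH]
  · set n := Real.sqrt (q ⬝ᵥ q) with hn
    have hnpos : 0 < n := Real.sqrt_pos.2 (dot_self_pos hq)
    have hsup : ‖q‖ ≤ n := by
      rw [pi_norm_le_iff_of_nonneg hnpos.le]
      intro i
      rw [Real.norm_eq_abs, ← Real.sqrt_sq_eq_abs]
      refine Real.sqrt_le_sqrt ?_
      have : q i ^ 2 ≤ ∑ j, q j * q j := by
        rw [sq]
        exact Finset.single_le_sum (f := fun j => q j * q j)
          (fun j _ => mul_self_nonneg _) (Finset.mem_univ i)
      exact this
    set v : Fin k → ℝ := (ε / 2 / n) • q with hv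
    have hvU : v ∈ U := by
      refine interior_subset (hball ?_)
      rw [Metric.mem_ball, dist_zero_right, hv, norm_smul]
      have h1 : ‖(ε / 2 / n : ℝ)‖ = ε / 2 / n := by
        rw [Real.norm_eq_abs, abs_of_pos (by positivity)]
      rw [h1]
      calc ε / 2 / n * ‖q‖ ≤ ε / 2 / n * n := by
            exact mul_le_mul_of_nonneg_left hsup (by positivity)
        _ = ε / 2 := by field_simp
        _ < ε := by linarith
    have hdot : v ⬝ᵥ q = ε / 2 * n := by
      rw [hv, smul_dotProduct, smul_eq_mul]
      have : q ⬝ᵥ q = n * n := (Real.mul_self_sqrt (dot_self_nonneg q)).symm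
      rw [this]
      field_simp
    calc ε / 2 * n = v ⬝ᵥ q := hdot.symm
      _ ≤ H q := dot_le_H hH hvU q

end SP

namespace SP2

open SP

variable {k : ℕ} {U : Set (Fin k → ℝ)} {H : (Fin k → ℝ) → ℝ}

lemma grad_eq_max (hH : ∀ p : Fin k → ℝ, IsGreatest ((fun v => ∑ i, v i * p i) '' U) (H p))
    (hHdiff : ∀ p : Fin k → ℝ, p ≠ 0 → DifferentiableAt ℝ H p)
    {q v : Fin k → ℝ} (hq : q ≠ 0) (hv : v ∈ U) (hmax : v ⬝ᵥ q = H q) :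
    grad H q = v := by
  set D : (Fin k → ℝ) →L[ℝ] ℝ := ∑ i, v i • ContinuousLinearMap.proj i with hD
  have hDapp : ∀ x : Fin k → ℝ, D x = v ⬝ᵥ x := by
    intro x
    simp [hD, ContinuousLinearMap.sum_apply, ContinuousLinearMap.proj_apply,
      dotProduct]
  have hmin : IsLocalMin (fun x => H x - D x) q := by
    refine Filter.Eventually.of_forall fun x => ?_
    have h1 : v ⬝ᵥ x ≤ H x := dot_le_H hH hv x
    simp only [hDapp, hmax]
    linarith
  have hd0 := hmin.fderiv_eq_zero
  have hdiff : DifferentiableAt ℝ H q := hHdiff q hq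
  have hsub : fderiv ℝ (fun x => H x - D x) q = fderiv ℝ H q - D := by
    rw [fderiv_fun_sub hdiff D.differentiableAt, D.fderiv]
  rw [hsub, sub_eq_zero] at hd0
  ext i
  have := congrArg (fun L : (Fin k → ℝ) →L[ℝ] ℝ => L (Pi.single i 1)) hd0
  rw [grad, this, hDapp]
  simp [dotProduct, Pi.single_apply]

lemma max_unique (hUconv : StrictConvex ℝ U)
    (hH : ∀ p : Fin k → ℝ, IsGreatest ((fun v => ∑ i, v i * p i) '' U) (H p))
    {q v w : Fin k → ℝ} (hq : q ≠ 0) (hv : v ∈ U) (hw : w ∈ U)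
    (hveq : v ⬝ᵥ q = H q) (hweq : w ⬝ᵥ q = H q) : v = w := by
  by_contra hne
  have hmid : (1/2 : ℝ) • v + (1/2 : ℝ) • w ∈ interior U :=
    hUconv hv hw hne (by norm_num) (by norm_num) (by norm_num)
  set m := (1/2 : ℝ) • v + (1/2 : ℝ) • w with hm
  obtain ⟨ε, hε, hball⟩ := Metric.isOpen_iff.1 isOpen_interior m hmid
  have hqn : (0:ℝ) < ‖q‖ := norm_pos_iff.2 hq
  set z := m + (ε / (2 * ‖q‖)) • q with hz
  have hzU : z ∈ U := by
    refine interior_subset (hball ?_)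
    rw [Metric.mem_ball, hz, dist_self_add_left, norm_smul, Real.norm_eq_abs,
      abs_of_pos (by positivity)]
    calc ε / (2 * ‖q‖) * ‖q‖ = ε / 2 := by field_simp
      _ < ε := by linarith
  have hzq : z ⬝ᵥ q = H q + (ε / (2 * ‖q‖)) * (q ⬝ᵥ q) := by
    rw [hz, add_dotProduct, smul_dotProduct, smul_eq_mul, hm,
      add_dotProduct, smul_dotProduct, smul_dotProduct,
      smul_eq_mul, smul_eq_mul, hveq, hweq]
    ring
  have hgt : H q < z ⬝ᵥ q := by
    rw [hzq]
    have : 0 < (ε / (2 * ‖q‖)) * (q ⬝ᵥ q) := by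
      have := dot_self_pos hq
      positivity
    linarith
  exact absurd (dot_le_H hH hzU q) (not_le.2 hgt)

lemma grad_spec (hUconv : StrictConvex ℝ U)
    (hH : ∀ p : Fin k → ℝ, IsGreatest ((fun v => ∑ i, v i * p i) '' U) (H p))
    (hHdiff : ∀ p : Fin k → ℝ, p ≠ 0 → DifferentiableAt ℝ H p)
    {q : Fin k → ℝ} (hq : q ≠ 0) : grad H q ∈ U ∧ grad H q ⬝ᵥ q = H q := by
  obtain ⟨v, hv, hveq⟩ := exists_max hH q
  rw [grad_eq_max hH hHdiff hq hv hveq]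
  exact ⟨hv, hveq⟩

lemma subgrad (hH : ∀ p : Fin k → ℝ, IsGreatest ((fun v => ∑ i, v i * p i) '' U) (H p))
    (hHdiff : ∀ p : Fin k → ℝ, p ≠ 0 → DifferentiableAt ℝ H p)
    {q : Fin k → ℝ} (hq : q ≠ 0) (x : Fin k → ℝ) :
    H q + grad H q ⬝ᵥ (x - q) ≤ H x := by
  set φ : ℝ → ℝ := fun s => H (q + s • (x - q)) with hφ
  have hconv : ConvexOn ℝ univ φ := by
    refine ⟨convex_univ, fun s _ t _ a b ha hb hab => ?_⟩
    have hpt : q + (a • s + b • t) • (x - q) = a • (q + s • (x-q)) + b • (q + t • (x-q)) := by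
      ext i
      simp only [Pi.add_apply, Pi.smul_apply, Pi.sub_apply, smul_eq_mul]
      linear_combination (-1:ℝ) * q i * hab
    calc φ (a • s + b • t) = H (q + (a • s + b • t) • (x - q)) := rfl
      _ = H (a • (q + s • (x-q)) + b • (q + t • (x-q))) := by rw [hpt]
      _ ≤ a • H (q + s • (x-q)) + b • H (q + t • (x-q)) :=
          (H_convex hH).2 (mem_univ _) (mem_univ _) ha hb hab
      _ = a • φ s + b • φ t := rfl
  have hg : HasDerivAt (fun s : ℝ => q + s • (x - q)) (x - q) 0 := by
    simpa using ((hasDerivAt_id (0:ℝ)).smul_const (x - q)).const_add q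
  have hF : HasFDerivAt H (fderiv ℝ H q) (q + (0:ℝ) • (x - q)) := by
    simpa using (hHdiff q hq).hasFDerivAt
  have hd : HasDerivAt φ ((fderiv ℝ H q) (x - q)) 0 := hF.comp_hasDerivAt 0 hg
  have hslope := hconv.le_slope_of_hasDerivAt (mem_univ 0) (mem_univ 1) one_pos hd
  rw [slope_def_field] at hslope
  have hφ1 : φ 1 = H x := by simp [hφ]
  have hφ0 : φ 0 = H q := by simp [hφ]
  rw [hφ1, hφ0] at hslope
  rw [fderiv_eq_dot H q (x - q)] at hslope
  norm_num at hslope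
  rw [dotProduct_sub]
  linarith

lemma step_down {φ : ℝ → ℝ} {d : ℝ} (hd : HasDerivAt φ d 0) (hneg : d < 0) :
    ∃ ε : ℝ, 0 < ε ∧ φ ε < φ 0 := by
  have hs := hasDerivAt_iff_tendsto_slope.1 hd
  have hmono : 𝓝[>] (0:ℝ) ≤ 𝓝[≠] (0:ℝ) :=
    nhdsWithin_mono 0 fun x hx => ne_of_gt hx
  have hs' : Tendsto (slope φ 0) (𝓝[>] 0) (𝓝 d) := hs.mono_left hmono
  have hev : ∀ᶠ s in 𝓝[>] (0:ℝ), slope φ 0 s < 0 := hs'.eventually (gt_mem_nhds hneg)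
  obtain ⟨ε, hε1, hε2⟩ := (hev.and self_mem_nhdsWithin).exists
  refine ⟨ε, hε2, ?_⟩
  rw [slope_def_field] at hε1
  have : (φ ε - φ 0) / ε < 0 := by simpa using hε1
  have := (div_neg_iff.1 this)
  rcases this with ⟨h1, h2⟩ | ⟨h1, h2⟩
  · linarith [hε2]
  · linarith

lemma grad_cont (hUc : IsCompact U) (hUconv : StrictConvex ℝ U)
    (hH : ∀ p : Fin k → ℝ, IsGreatest ((fun v => ∑ i, v i * p i) '' U) (H p))
    (hHdiff : ∀ p : Fin k → ℝ, p ≠ 0 → DifferentiableAt ℝ H p)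
    {p : ℝ → Fin k → ℝ} (hpc : Continuous p) (hpne : ∀ t, p t ≠ 0) :
    Continuous (fun t => grad H (p t)) := by
  rw [continuous_iff_continuousAt]
  intro t
  rw [ContinuousAt]
  apply tendsto_of_subseq_tendsto
  intro ns hns
  set G : ℝ → Fin k → ℝ := fun s => grad H (p s) with hG
  have hGU : ∀ s, G s ∈ U := fun s => (grad_spec hUconv hH hHdiff (hpne s)).1
  obtain ⟨w, hwU, φ, hφmono, hφtend⟩ := hUc.tendsto_subseq (fun n => hGU (ns n))
  have hptend : Tendsto (fun n => p (ns (φ n))) atTop (𝓝 (p t)) :=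
    (hpc.tendsto t).comp (hns.comp hφmono.tendsto_atTop)
  have hw : w ⬝ᵥ p t = H (p t) := by
    have hdot : Tendsto (fun n => G (ns (φ n)) ⬝ᵥ p (ns (φ n))) atTop (𝓝 (w ⬝ᵥ p t)) := by
      apply tendsto_finset_sum
      intro i _
      exact ((tendsto_pi_nhds.1 hφtend i).mul (tendsto_pi_nhds.1 hptend i))
    have heq : ∀ n, G (ns (φ n)) ⬝ᵥ p (ns (φ n)) = H (p (ns (φ n))) :=
      fun n => (grad_spec hUconv hH hHdiff (hpne _)).2
    have hHtend : Tendsto (fun n => H (p (ns (φ n)))) atTop (𝓝 (H (p t))) :=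
      ((H_cont hUc hH).tendsto (p t)).comp hptend
    rw [funext heq] at hdot
    exact tendsto_nhds_unique hdot hHtend
  have hwG : w = G t :=
    (grad_eq_max hH hHdiff (hpne t) hwU hw).symm
  rw [hwG] at hφtend
  exact ⟨φ, hφtend⟩

end SP2

namespace SP3

open SP

lemma skew_basis {k : ℕ} {M : Matrix (Fin k) (Fin k) ℝ} (hM : Mᵀ = -M) (hrank : M.rank = 2) :
    ∃ e f : Fin k → ℝ, ∃ a : ℝ, 0 < a ∧
      e ⬝ᵥ e = 1 ∧ f ⬝ᵥ f = 1 ∧ e ⬝ᵥ f = 0 ∧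
      M.mulVec e = a • f ∧ M.mulVec f = -(a • e) ∧
      (∀ v : Fin k → ℝ, ∃ α β : ℝ, M.mulVec v = α • e + β • f) := by
  classical
  set V : Submodule ℝ (Fin k → ℝ) := LinearMap.range M.mulVecLin with hV
  have hfr : Module.finrank ℝ V = 2 := hrank
  -- a nonzero element of V
  have hne : ∃ u : Fin k → ℝ, u ∈ V ∧ u ≠ 0 := by
    by_contra hcon
    push_neg at hcon
    have : V = ⊥ := by
      rw [Submodule.eq_bot_iff]
      intro u hu
      by_contra h0
      exact h0 (hcon u hu)
    rw [this] at hfr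
    simp at hfr
  obtain ⟨u1, hu1V, hu1⟩ := hne
  -- an element of V not in the span of u1
  have hspan_lt : Submodule.span ℝ {u1} < V := by
    refine lt_of_le_of_ne (Submodule.span_le.2 (by simpa using hu1V)) ?_
    intro heq
    have h1 : Module.finrank ℝ (Submodule.span ℝ ({u1} : Set (Fin k → ℝ))) = 1 :=
      finrank_span_singleton hu1
    rw [heq, hfr] at h1
    norm_num at h1
  obtain ⟨u2, hu2V, hu2span⟩ := SetLike.exists_of_lt hspan_lt
  -- Gram–Schmidt
  set n1 : ℝ := Real.sqrt (u1 ⬝ᵥ u1) with hn1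
  have hn1pos : 0 < n1 := Real.sqrt_pos.2 (dot_self_pos hu1)
  set e : Fin k → ℝ := n1⁻¹ • u1 with he
  have hee : e ⬝ᵥ e = 1 := by
    rw [he, smul_dotProduct, dotProduct_smul, smul_eq_mul, smul_eq_mul,
      show u1 ⬝ᵥ u1 = n1 * n1 from (Real.mul_self_sqrt (dot_self_nonneg u1)).symm]
    field_simp
  have heV : e ∈ V := V.smul_mem _ hu1V
  set f0 : Fin k → ℝ := u2 - (u2 ⬝ᵥ e) • e with hf0
  have hf0e : f0 ⬝ᵥ e = 0 := by
    rw [hf0, sub_dotProduct, smul_dotProduct, smul_eq_mul, hee]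
    ring
  have hf0ne : f0 ≠ 0 := by
    intro h0
    apply hu2span
    obtain ⟨c, hc⟩ : ∃ c : ℝ, u2 = c • u1 := by
      refine ⟨(u2 ⬝ᵥ e) * n1⁻¹, ?_⟩
      have h2 := sub_eq_zero.1 h0
      rw [mul_smul, ← he]
      exact h2
    rw [Submodule.mem_span_singleton]
    exact ⟨c, hc.symm⟩
  set n2 : ℝ := Real.sqrt (f0 ⬝ᵥ f0) with hn2
  have hn2pos : 0 < n2 := Real.sqrt_pos.2 (dot_self_pos hf0ne)
  set f : Fin k → ℝ := n2⁻¹ • f0 with hf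
  have hff : f ⬝ᵥ f = 1 := by
    rw [hf, smul_dotProduct, dotProduct_smul, smul_eq_mul, smul_eq_mul,
      show f0 ⬝ᵥ f0 = n2 * n2 from (Real.mul_self_sqrt (dot_self_nonneg f0)).symm]
    field_simp
  have hef : e ⬝ᵥ f = 0 := by
    rw [hf, dotProduct_smul, smul_eq_mul, dotProduct_comm, hf0e, mul_zero]
  have hfV : f ∈ V := by
    rw [hf, hf0]
    exact V.smul_mem _ (V.sub_mem hu2V (V.smul_mem _ heV))
  clear hf0 he hf hn1 hn2
  clear_value f0 f e n1 n2
  -- span {e, f} = V, hence expansion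
  have hind : LinearIndependent ℝ ![e, f] := by
    rw [linearIndependent_fin2]
    simp only [Matrix.cons_val_one, Matrix.head_cons, Matrix.cons_val_zero]
    constructor
    · intro h0; rw [h0] at hff; simp [zero_dotProduct] at hff
    · intro a haf
      have : (a • f) ⬝ᵥ e = e ⬝ᵥ e := by rw [haf]
      rw [smul_dotProduct, smul_eq_mul, dotProduct_comm, hef, mul_zero, hee] at this
      norm_num at this
  have hWV : Submodule.span ℝ (Set.range ![e, f]) = V := by
    refine Submodule.eq_of_le_of_finrank_le ?_ ?_
    · rw [Submodule.span_le]
      rintro x ⟨i, rfl⟩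
      fin_cases i
      · exact heV
      · exact hfV
    · rw [hfr, finrank_span_eq_card hind]
      simp
  have hexp : ∀ v, v ∈ V → v = (v ⬝ᵥ e) • e + (v ⬝ᵥ f) • f := by
    intro v hv
    rw [← hWV] at hv
    obtain ⟨c, hc⟩ := (Submodule.mem_span_range_iff_exists_fun ℝ).1 hv
    have hveq : v = c 0 • e + c 1 • f := by
      rw [← hc]
      simp [Fin.sum_univ_two]
    have hce : v ⬝ᵥ e = c 0 := by
      rw [hveq, add_dotProduct, smul_dotProduct, smul_dotProduct,
        smul_eq_mul, smul_eq_mul, hee, dotProduct_comm, hef]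
      ring
    have hcf : v ⬝ᵥ f = c 1 := by
      rw [hveq, add_dotProduct, smul_dotProduct, smul_dotProduct,
        smul_eq_mul, smul_eq_mul, hef, hff]
      ring
    rw [hce, hcf, hveq]
  have hMmem : ∀ v : Fin k → ℝ, M.mulVec v ∈ V := fun v => ⟨v, rfl⟩
  -- M on e, f
  have hMee : M.mulVec e ⬝ᵥ e = 0 := by
    have h1 := skew_dot hM e e
    have h2 : e ⬝ᵥ M.mulVec e = M.mulVec e ⬝ᵥ e := dotProduct_comm _ _
    rw [h2] at h1
    linarith
  have hMff : M.mulVec f ⬝ᵥ f = 0 := by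
    have h1 := skew_dot hM f f
    have h2 : f ⬝ᵥ M.mulVec f = M.mulVec f ⬝ᵥ f := dotProduct_comm _ _
    rw [h2] at h1
    linarith
  set a0 : ℝ := M.mulVec e ⬝ᵥ f with ha0
  have hMe : M.mulVec e = a0 • f := by
    have := hexp _ (hMmem e)
    rw [hMee] at this
    simpa using this
  have hMfe : M.mulVec f ⬝ᵥ e = -a0 := by
    rw [skew_dot hM f e]
    have h3 : f ⬝ᵥ M.mulVec e = a0 := dotProduct_comm _ _
    rw [h3]
  have hMf : M.mulVec f = -(a0 • e) := by
    have := hexp _ (hMmem f)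
    rw [hMff, hMfe] at this
    rw [this]
    simp [neg_smul]
  have ha0ne : a0 ≠ 0 := by
    intro h0
    obtain ⟨w, hw⟩ := heV
    have : w ⬝ᵥ M.mulVec e = 0 := by rw [hMe, h0]; simp
    have h1 := skew_dot hM w e
    rw [Matrix.mulVecLin_apply] at hw
    rw [hw, this, hee] at h1
    norm_num at h1
  rcases lt_or_gt_of_ne ha0ne with hneg | hpos
  · refine ⟨e, -f, -a0, by linarith, hee, by
      rw [neg_dotProduct, dotProduct_neg, hff]; ring, by
      rw [dotProduct_neg, hef]; ring, by
      rw [hMe]; module, by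
      rw [Matrix.mulVec_neg, hMf]; module, ?_⟩
    intro v
    obtain ⟨w, hw⟩ := hMmem v
    rw [Matrix.mulVecLin_apply] at hw
    have := hexp _ (hMmem v)
    refine ⟨M.mulVec v ⬝ᵥ e, -(M.mulVec v ⬝ᵥ f), ?_⟩
    conv_lhs => rw [this]
    module
  · refine ⟨e, f, a0, hpos, hee, hff, hef, hMe, hMf, ?_⟩
    intro v
    exact ⟨M.mulVec v ⬝ᵥ e, M.mulVec v ⬝ᵥ f, hexp _ (hMmem v)⟩

end SP3

namespace SP4

open SP SP2 SP3

variable {k : ℕ}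

lemma hasDerivAt_dot {p : ℝ → Fin k → ℝ} {p' : Fin k → ℝ} {t : ℝ}
    (h : HasDerivAt p p' t) (e : Fin k → ℝ) :
    HasDerivAt (fun s => p s ⬝ᵥ e) (p' ⬝ᵥ e) t := by
  set D : (Fin k → ℝ) →L[ℝ] ℝ := ∑ i, e i • ContinuousLinearMap.proj i with hD
  have hDapp : ∀ x : Fin k → ℝ, D x = x ⬝ᵥ e := by
    intro x
    simp [hD, ContinuousLinearMap.sum_apply, ContinuousLinearMap.proj_apply,
      dotProduct, mul_comm]
  have h2 := D.hasFDerivAt.comp_hasDerivAt t h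
  have h3 : (⇑D ∘ p) = fun s => p s ⬝ᵥ e := funext fun s => hDapp (p s)
  rw [h3, hDapp] at h2
  exact h2

lemma continuous_dot {g : ℝ → Fin k → ℝ} (hg : Continuous g) (e : Fin k → ℝ) :
    Continuous fun t => g t ⬝ᵥ e := by
  apply continuous_finset_sum
  exact fun i _ => ((continuous_apply i).comp hg).mul continuous_const

lemma abs_dot_le (v e : Fin k → ℝ) :
    |v ⬝ᵥ e| ≤ Real.sqrt (v ⬝ᵥ v) * Real.sqrt (e ⬝ᵥ e) := by
  rw [← Real.sqrt_mul (dot_self_nonneg v), ← Real.sqrt_sq_eq_abs]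
  apply Real.sqrt_le_sqrt
  have h := Finset.sum_mul_sq_le_sq_mul_sq Finset.univ v e
  have h1 : v ⬝ᵥ v = ∑ i, v i ^ 2 := by simp [dotProduct, sq]
  have h2 : e ⬝ᵥ e = ∑ i, e i ^ 2 := by simp [dotProduct, sq]
  rw [h1, h2]
  exact h

end SP4

open SP SP2 SP3 SP4 in
set_option maxHeartbeats 4000000 in
/-- Part (2) of the main theorem: on a two-dimensional coadjoint orbit (`rank M = 2`),
a solution of `p' = -M ∇H(p)` with `H(p(0)) = 1` whose initial gradient does not lie in
`ker M` has nonvanishing derivative and is periodic. -/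
theorem solution_periodic_of_grad_not_in_ker (k : ℕ) (hk : 2 ≤ k)
    (U : Set (Fin k → ℝ)) (hUc : IsCompact U) (hUconv : StrictConvex ℝ U)
    (hU0 : (0 : Fin k → ℝ) ∈ interior U)
    (H : (Fin k → ℝ) → ℝ)
    (hH : ∀ p : Fin k → ℝ, IsGreatest ((fun v => ∑ i, v i * p i) '' U) (H p))
    (hHdiff : ∀ p : Fin k → ℝ, p ≠ 0 → DifferentiableAt ℝ H p)
    (M : Matrix (Fin k) (Fin k) ℝ) (hM : Mᵀ = -M) (hrank : M.rank = 2)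
    (p : ℝ → Fin k → ℝ)
    (hpne : ∀ t : ℝ, p t ≠ 0)
    (hp : ∀ t : ℝ, HasDerivAt p (-(M.mulVec (grad H (p t)))) t)
    (hH1 : H (p 0) = 1)
    (hker : M.mulVec (grad H (p 0)) ≠ 0) :
    (∀ t : ℝ, -(M.mulVec (grad H (p t))) ≠ 0) ∧
    ∃ T : ℝ, 0 < T ∧ ∀ t : ℝ, p (t + T) = p t := by
  classical
  set g : ℝ → Fin k → ℝ := fun t => grad H (p t) with hgdef
  have hpdiff : Differentiable ℝ p := fun t => (hp t).differentiableAt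
  have hpc : Continuous p := hpdiff.continuous
  have hgc : Continuous g := grad_cont hUc hUconv hH hHdiff hpc hpne
  -- H is constant equal to 1 along the trajectory
  have hgMg : ∀ t, g t ⬝ᵥ M.mulVec (g t) = 0 := by
    intro t
    have h1 := skew_dot hM (g t) (g t)
    have h2 : g t ⬝ᵥ M.mulVec (g t) = M.mulVec (g t) ⬝ᵥ g t := dotProduct_comm _ _
    rw [h2] at h1 ⊢
    linarith
  have hHp1 : ∀ t, H (p t) = 1 := by
    have hd : ∀ t, HasDerivAt (fun s => H (p s)) 0 t := by
      intro t
      have hF := (hHdiff (p t) (hpne t)).hasFDerivAt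
      have h2 := hF.comp_hasDerivAt t (hp t)
      have h3 : (fderiv ℝ H (p t)) (-(M.mulVec (grad H (p t)))) = 0 := by
        rw [fderiv_eq_dot, dotProduct_neg]
        exact neg_eq_zero.2 (hgMg t)
      rw [h3] at h2
      exact h2
    intro t
    have hconst := is_const_of_deriv_eq_zero (f := fun s => H (p s))
      (fun s => (hd s).differentiableAt) (fun s => (hd s).deriv) t 0
    rw [← hH1]
    exact hconst
  -- the orthonormal frame of the range of M
  obtain ⟨e, f, a, hapos, hee, hff, hef, hMe, hMf, hMspan⟩ := skew_basis hM hrank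
  have hfe : f ⬝ᵥ e = 0 := by rw [dotProduct_comm]; exact hef
  have hMcoef : ∀ v : Fin k → ℝ,
      M.mulVec v = (M.mulVec v ⬝ᵥ e) • e + (M.mulVec v ⬝ᵥ f) • f := by
    intro v
    obtain ⟨α, β, hv⟩ := hMspan v
    have hα : M.mulVec v ⬝ᵥ e = α := by
      rw [hv, add_dotProduct, smul_dotProduct, smul_dotProduct,
        smul_eq_mul, smul_eq_mul, hee, hfe]
      ring
    have hβ : M.mulVec v ⬝ᵥ f = β := by
      rw [hv, add_dotProduct, smul_dotProduct, smul_dotProduct,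
        smul_eq_mul, smul_eq_mul, hef, hff]
      ring
    rw [hα, hβ, hv]
  -- coordinates
  set x : ℝ → ℝ := fun t => p t ⬝ᵥ e with hxdef
  set y : ℝ → ℝ := fun t => p t ⬝ᵥ f with hydef
  set xd : ℝ → ℝ := fun t => a * (g t ⬝ᵥ f) with hxddef
  set yd : ℝ → ℝ := fun t => -(a * (g t ⬝ᵥ e)) with hyddef
  have hxval : ∀ t, (-(M.mulVec (g t))) ⬝ᵥ e = xd t := by
    intro t
    rw [neg_dotProduct, skew_dot hM (g t) e, hMe, dotProduct_smul, neg_neg,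
      smul_eq_mul]
  have hyval : ∀ t, (-(M.mulVec (g t))) ⬝ᵥ f = yd t := by
    intro t
    rw [neg_dotProduct, skew_dot hM (g t) f, hMf, dotProduct_neg,
      dotProduct_smul, neg_neg, smul_eq_mul, hyddef]
  have hx' : ∀ t, HasDerivAt x (xd t) t := by
    intro t
    have := hasDerivAt_dot (hp t) e
    rwa [hxval t] at this
  have hy' : ∀ t, HasDerivAt y (yd t) t := by
    intro t
    have := hasDerivAt_dot (hp t) f
    rwa [hyval t] at this
  -- reconstruction of p from its coordinates
  have hrecon : ∀ t, p t = p 0 + (x t - x 0) • e + (y t - y 0) • f := by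
    set φ : ℝ → Fin k → ℝ :=
      fun t => p t - p 0 - (x t - x 0) • e - (y t - y 0) • f with hφdef
    have hφ' : ∀ t, HasDerivAt φ 0 t := by
      intro t
      have h1 := (((hp t).sub_const (p 0)).sub
        (((hx' t).sub_const (x 0)).smul_const e)).sub
        (((hy' t).sub_const (y 0)).smul_const f)
      have h2 : -(M.mulVec (g t)) - xd t • e - yd t • f = 0 := by
        have h3 := hMcoef (g t)
        have h4 : xd t = -(M.mulVec (g t) ⬝ᵥ e) := by rw [← hxval t, neg_dotProduct]
        have h5 : yd t = -(M.mulVec (g t) ⬝ᵥ f) := by rw [← hyval t, neg_dotProduct]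
        conv_lhs => rw [h3]
        rw [h4, h5]
        module
      rwa [h2] at h1
    have hφconst : ∀ t, φ t = φ 0 := by
      intro t
      have hzero : (ContinuousLinearMap.toSpanSingleton ℝ (0 : Fin k → ℝ)) = 0 := by
        ext v
        simp
      refine is_const_of_fderiv_eq_zero (𝕜 := ℝ) (fun s => (hφ' s).differentiableAt)
        (fun s => ?_) t 0
      have := (hφ' s).hasFDerivAt.fderiv
      rw [this, hzero]
    have hφ0 : φ 0 = 0 := by simp [hφdef]
    intro t
    have := hφconst t
    rw [hφ0, hφdef] at this
    have h6 : p t - p 0 - (x t - x 0) • e - (y t - y 0) • f = 0 := this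
    have h7 := sub_eq_zero.1 (by rw [show p t - p 0 - (x t - x 0) • e - (y t - y 0) • f =
      p t - (p 0 + (x t - x 0) • e + (y t - y 0) • f) by module] at h6; exact h6)
    exact h7
  -- the interior point pc
  have hg0ne : g 0 ⬝ᵥ e ≠ 0 ∨ g 0 ⬝ᵥ f ≠ 0 := by
    by_contra hcon
    push_neg at hcon
    obtain ⟨h1, h2⟩ := hcon
    apply hker
    have h3 := hMcoef (g 0)
    have h4 : M.mulVec (g 0) ⬝ᵥ e = 0 := by
      rw [skew_dot hM (g 0) e, hMe, dotProduct_smul, smul_eq_mul, h2, mul_zero, neg_zero]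
    have h5 : M.mulVec (g 0) ⬝ᵥ f = 0 := by
      rw [skew_dot hM (g 0) f, hMf, dotProduct_neg, dotProduct_smul, smul_eq_mul,
        h1, mul_zero, neg_zero, neg_zero]
    rw [h4, h5] at h3
    simpa using h3
  set u : Fin k → ℝ := (g 0 ⬝ᵥ e) • e + (g 0 ⬝ᵥ f) • f with hudef
  have hgu : g 0 ⬝ᵥ u = (g 0 ⬝ᵥ e)^2 + (g 0 ⬝ᵥ f)^2 := by
    rw [hudef, dotProduct_add, dotProduct_smul, dotProduct_smul,
      smul_eq_mul, smul_eq_mul]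
    ring
  have hgupos : 0 < g 0 ⬝ᵥ u := by
    rw [hgu]
    rcases hg0ne with h | h
    · have h1 := sq_nonneg (g 0 ⬝ᵥ f)
      have h2 : 0 < (g 0 ⬝ᵥ e)^2 := by positivity
      linarith
    · have h1 := sq_nonneg (g 0 ⬝ᵥ e)
      have h2 : 0 < (g 0 ⬝ᵥ f)^2 := by positivity
      linarith
  have hψ : HasDerivAt (fun s : ℝ => H (p 0 - s • u)) (-(g 0 ⬝ᵥ u)) 0 := by
    have hg1 : HasDerivAt (fun s : ℝ => p 0 - s • u) (-u) 0 := by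
      simpa using ((hasDerivAt_id (0:ℝ)).smul_const u).const_sub (p 0)
    have hF : HasFDerivAt H (fderiv ℝ H (p 0)) (p 0 - (0:ℝ) • u) := by
      simpa using (hHdiff (p 0) (hpne 0)).hasFDerivAt
    have h2 := hF.comp_hasDerivAt 0 hg1
    have h3 : (fderiv ℝ H (p 0)) (-u) = -(g 0 ⬝ᵥ u) := by
      rw [fderiv_eq_dot, dotProduct_neg]
    rwa [h3] at h2
  obtain ⟨ε, hεpos, hεlt⟩ := step_down hψ (by linarith)
  set pc : Fin k → ℝ := p 0 - ε • u with hpcdef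
  have hpclt : H pc < 1 := by
    have h0 : H (p 0 - (0:ℝ) • u) = 1 := by
      rw [show p 0 - (0:ℝ) • u = p 0 by simp]
      exact hHp1 0
    calc H pc = H (p 0 - ε • u) := rfl
      _ < H (p 0 - (0:ℝ) • u) := hεlt
      _ = 1 := h0
  set c1 : ℝ := x 0 - ε * (g 0 ⬝ᵥ e) with hc1def
  set c2 : ℝ := y 0 - ε * (g 0 ⬝ᵥ f) with hc2def
  have hpc_eq : pc = p 0 + (c1 - x 0) • e + (c2 - y 0) • f := by
    rw [hpcdef, hudef, hc1def, hc2def]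
    module
  have hdiffpt : ∀ t, pc - p t = (c1 - x t) • e + (c2 - y t) • f := by
    intro t
    rw [hpc_eq]
    conv_lhs => rw [hrecon t]
    module
  have hsubg : ∀ t, g t ⬝ᵥ (pc - p t) ≤ H pc - 1 := by
    intro t
    have h1 := subgrad hH hHdiff (hpne t) pc
    rw [hHp1 t] at h1
    show grad H (p t) ⬝ᵥ (pc - p t) ≤ H pc - 1
    linarith
  -- bounds on the coordinates
  obtain ⟨s, hspos, hcoer⟩ := H_coercive hU0 hH
  have hsq : ∀ t, Real.sqrt (p t ⬝ᵥ p t) ≤ 1 / s := by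
    intro t
    have h1 := hcoer (p t)
    rw [hHp1 t] at h1
    rw [le_div_iff₀ hspos]
    linarith
  have hxb : ∀ t, |x t| ≤ 1 / s := by
    intro t
    have h2 := abs_dot_le (p t) e
    rw [hee, Real.sqrt_one, mul_one] at h2
    exact h2.trans (hsq t)
  have hyb : ∀ t, |y t| ≤ 1 / s := by
    intro t
    have h2 := abs_dot_le (p t) f
    rw [hff, Real.sqrt_one, mul_one] at h2
    exact h2.trans (hsq t)
  -- the complex curve
  set z : ℝ → ℂ := fun t => ((x t - c1 : ℝ) : ℂ) + ((y t - c2 : ℝ) : ℂ) * Complex.I with hzdef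
  set zd : ℝ → ℂ := fun t => ((xd t : ℝ) : ℂ) + ((yd t : ℝ) : ℂ) * Complex.I with hzddef
  have hz' : ∀ t, HasDerivAt z (zd t) t := by
    intro t
    have h1 : HasDerivAt (fun s => ((x s - c1 : ℝ) : ℂ)) ((xd t : ℝ) : ℂ) t :=
      ((hx' t).sub_const c1).ofReal_comp
    have h2 : HasDerivAt (fun s => ((y s - c2 : ℝ) : ℂ) * Complex.I)
        (((yd t : ℝ) : ℂ) * Complex.I) t :=
      (((hy' t).sub_const c2).ofReal_comp).mul_const Complex.I
    exact h1.add h2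
  have hxc : Continuous x := Differentiable.continuous (fun t => (hx' t).differentiableAt)
  have hyc : Continuous y := Differentiable.continuous (fun t => (hy' t).differentiableAt)
  have hzcont : Continuous z := by
    apply Continuous.add
    · exact Complex.continuous_ofReal.comp (hxc.sub continuous_const)
    · exact (Complex.continuous_ofReal.comp (hyc.sub continuous_const)).mul continuous_const
  have hzdcont : Continuous zd := by
    have hxdc : Continuous xd := continuous_const.mul (continuous_dot hgc f)
    have hydc : Continuous yd := (continuous_const.mul (continuous_dot hgc e)).neg
    exact (Complex.continuous_ofReal.comp hxdc).add
      ((Complex.continuous_ofReal.comp hydc).mul continuous_const)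
  have hzne : ∀ t, z t ≠ 0 := by
    intro t h0
    have h0' : ((x t - c1 : ℝ) : ℂ) + ((y t - c2 : ℝ) : ℂ) * Complex.I = 0 := h0
    have hre : x t - c1 = 0 := by
      have := congrArg Complex.re h0'
      simpa using this
    have him : y t - c2 = 0 := by
      have := congrArg Complex.im h0'
      simpa using this
    have hpt : p t = pc := by
      rw [hrecon t, hpc_eq]
      have hx1 : x t = c1 := by linarith
      have hy1 : y t = c2 := by linarith
      rw [hx1, hy1]
    have : H pc = 1 := by rw [← hpt]; exact hHp1 t
    linarith
  set w : ℝ → ℂ := fun t => zd t / z t with hwdef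
  have hwcont : Continuous w := hzdcont.div hzcont hzne
  set L : ℝ → ℂ := fun t => ∫ τ in (0:ℝ)..t, w τ with hLdef
  have hL' : ∀ t, HasDerivAt L (w t) t := by
    intro t
    exact intervalIntegral.integral_hasDerivAt_right (hwcont.intervalIntegrable 0 t)
      (hwcont.stronglyMeasurableAtFilter MeasureTheory.volume (nhds t)) hwcont.continuousAt
  have hzL : ∀ t, z t = z 0 * Complex.exp (L t) := by
    have hη' : ∀ t, HasDerivAt (fun t => z t * Complex.exp (-L t)) 0 t := by
      intro t
      have h1 := (hz' t).mul ((hL' t).neg.cexp)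
      refine h1.congr_deriv ?_
      have hz := hzne t
      rw [hwdef]
      field_simp
      ring
    have hηconst : ∀ t, z t * Complex.exp (-L t) = z 0 * Complex.exp (-L 0) := by
      intro t
      have hzero : (ContinuousLinearMap.toSpanSingleton ℝ (0 : ℂ)) = 0 := by
        ext v; simp
      exact is_const_of_fderiv_eq_zero (𝕜 := ℝ) (fun s => (hη' s).differentiableAt)
        (fun s => by rw [(hη' s).hasFDerivAt.fderiv, hzero]) t 0
    intro t
    have h1 := hηconst t
    have hL0 : L 0 = 0 := by simp [hLdef]
    rw [hL0] at h1
    simp only [neg_zero, Complex.exp_zero, mul_one] at h1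
    have h2 : Complex.exp (-L t) * Complex.exp (L t) = 1 := by
      rw [← Complex.exp_add]; simp
    calc z t = z t * (Complex.exp (-L t) * Complex.exp (L t)) := by rw [h2, mul_one]
      _ = (z t * Complex.exp (-L t)) * Complex.exp (L t) := by ring
      _ = z 0 * Complex.exp (L t) := by rw [h1]
  set Θ : ℝ → ℝ := fun t => (L t).im with hΘdef
  have hΘ' : ∀ t, HasDerivAt Θ ((w t).im) t := by
    intro t
    exact Complex.imCLM.hasFDerivAt.comp_hasDerivAt t (hL' t)
  -- the angular speed is bounded away from zero
  have hdotpc : ∀ t, g t ⬝ᵥ (pc - p t) =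
      (c1 - x t) * (g t ⬝ᵥ e) + (c2 - y t) * (g t ⬝ᵥ f) := by
    intro t
    rw [hdiffpt t, dotProduct_add, dotProduct_smul, dotProduct_smul,
      smul_eq_mul, smul_eq_mul]
  have hNpos : ∀ t, 0 < Complex.normSq (z t) := fun t => Complex.normSq_pos.2 (hzne t)
  have hwim : ∀ t, (w t).im = (a * (g t ⬝ᵥ (pc - p t))) / Complex.normSq (z t) := by
    intro t
    rw [hwdef, Complex.div_im]
    have hzre : (z t).re = x t - c1 := by simp [hzdef]
    have hzim : (z t).im = y t - c2 := by simp [hzdef]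
    have hzdre : (zd t).re = xd t := by simp [hzddef]
    have hzdim : (zd t).im = yd t := by simp [hzddef]
    rw [hzre, hzim, hzdre, hzdim, hdotpc t, hxddef, hyddef]
    have hN := (hNpos t).ne'
    field_simp
    ring
  set R2 : ℝ := (1/s + |c1|)^2 + (1/s + |c2|)^2 with hR2def
  have hNle : ∀ t, Complex.normSq (z t) ≤ R2 := by
    intro t
    have hNz : Complex.normSq (z t) = (x t - c1)^2 + (y t - c2)^2 := by
      simp [hzdef, Complex.normSq_apply]
      ring
    rw [hNz, hR2def]
    have h1 : |x t - c1| ≤ 1/s + |c1| := le_trans (abs_sub _ _) (add_le_add (hxb t) le_rfl)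
    have h2 : |y t - c2| ≤ 1/s + |c2| := le_trans (abs_sub _ _) (add_le_add (hyb t) le_rfl)
    have h3 : (x t - c1)^2 ≤ (1/s + |c1|)^2 := by
      rw [← sq_abs]
      exact pow_le_pow_left₀ (abs_nonneg _) h1 2
    have h4 : (y t - c2)^2 ≤ (1/s + |c2|)^2 := by
      rw [← sq_abs]
      exact pow_le_pow_left₀ (abs_nonneg _) h2 2
    linarith
  have hR2pos : 0 < R2 := lt_of_lt_of_le (hNpos 0) (hNle 0)
  set δ : ℝ := a * (1 - H pc) / R2 with hδdef
  have hδpos : 0 < δ := by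
    rw [hδdef]
    have : 0 < 1 - H pc := by linarith
    positivity
  have hwim_le : ∀ t, (w t).im ≤ -δ := by
    intro t
    rw [hwim t, hδdef]
    have h1 : a * (g t ⬝ᵥ (pc - p t)) ≤ a * (H pc - 1) :=
      mul_le_mul_of_nonneg_left (hsubg t) hapos.le
    have hrhs : -(a * (1 - H pc) / R2) = (a * (H pc - 1)) / R2 := by ring
    rw [hrhs, div_le_div_iff₀ (hNpos t) hR2pos]
    have h2 := hNle t
    have h4 : a * (H pc - 1) < 0 := mul_neg_of_pos_of_neg hapos (by linarith)
    have k1 : a * (g t ⬝ᵥ (pc - p t)) * R2 ≤ (a * (H pc - 1)) * R2 :=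
      mul_le_mul_of_nonneg_right h1 hR2pos.le
    have k2 : (a * (H pc - 1)) * R2 ≤ (a * (H pc - 1)) * Complex.normSq (z t) :=
      mul_le_mul_of_nonpos_left h2 h4.le
    linarith
  -- part (1)
  have hpart1 : ∀ t : ℝ, -(M.mulVec (g t)) ≠ 0 := by
    intro t h0
    have hMg0 : M.mulVec (g t) = 0 := by rwa [neg_eq_zero] at h0
    have hxd0 : xd t = 0 := by
      rw [← hxval t, hMg0]
      simp
    have hyd0 : yd t = 0 := by
      rw [← hyval t, hMg0]
      simp
    have hzd0 : zd t = 0 := by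
      show ((xd t : ℝ) : ℂ) + ((yd t : ℝ) : ℂ) * Complex.I = 0
      rw [hxd0, hyd0]
      simp
    have : (w t).im = 0 := by
      rw [hwdef]
      show (zd t / z t).im = 0
      rw [hzd0]
      simp
    linarith [hwim_le t, hδpos]
  -- Θ is a decreasing bijection of ℝ
  have hΘanti : StrictAnti Θ := by
    apply strictAnti_of_deriv_neg
    intro t
    rw [(hΘ' t).deriv]
    linarith [hwim_le t, hδpos]
  have hΘdiff : Differentiable ℝ Θ := fun t => (hΘ' t).differentiableAt
  have hΘcont : Continuous Θ := hΘdiff.continuous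
  have hΘlin : ∀ t : ℝ, 0 ≤ t → Θ t ≤ Θ 0 - δ * t := by
    have hanti2 : Antitone (fun t => Θ t + δ * t) := by
      have hsum : ∀ t : ℝ, HasDerivAt (fun u => Θ u + δ * u) ((w t).im + δ) t := by
        intro t
        have hlin : HasDerivAt (fun u : ℝ => δ * u) δ t := by
          simpa using (hasDerivAt_id t).const_mul δ
        exact (hΘ' t).add hlin
      apply antitone_of_deriv_nonpos
      · exact fun t => (hsum t).differentiableAt
      · intro t
        rw [(hsum t).deriv]
        have := hwim_le t
        linarith
    intro t ht
    have := hanti2 ht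
    simp only [mul_zero, add_zero] at this
    linarith
  have hΘlin2 : ∀ t : ℝ, t ≤ 0 → Θ 0 - δ * t ≤ Θ t := by
    have hanti2 : Antitone (fun t => Θ t + δ * t) := by
      have hsum : ∀ t : ℝ, HasDerivAt (fun u => Θ u + δ * u) ((w t).im + δ) t := by
        intro t
        have hlin : HasDerivAt (fun u : ℝ => δ * u) δ t := by
          simpa using (hasDerivAt_id t).const_mul δ
        exact (hΘ' t).add hlin
      apply antitone_of_deriv_nonpos
      · exact fun t => (hsum t).differentiableAt
      · intro t
        rw [(hsum t).deriv]
        have := hwim_le t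
        linarith
    intro t ht
    have := hanti2 ht
    simp only [mul_zero, add_zero] at this
    linarith
  have hΘsurj : Function.Surjective Θ := by
    intro yv
    set t2 : ℝ := max 0 ((Θ 0 - yv) / δ) with ht2def
    set t1 : ℝ := min 0 ((Θ 0 - yv) / δ) with ht1def
    have ht12 : t1 ≤ t2 := le_trans (min_le_left _ _) (le_max_left _ _)
    have h1 : Θ t2 ≤ yv := by
      have ha := hΘlin t2 (le_max_left _ _)
      have hb : (Θ 0 - yv) / δ ≤ t2 := le_max_right _ _
      have hc : Θ 0 - yv ≤ δ * t2 := by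
        rw [div_le_iff₀ hδpos] at hb
        linarith
      linarith
    have h2 : yv ≤ Θ t1 := by
      have ha := hΘlin2 t1 (min_le_left _ _)
      have hb : t1 ≤ (Θ 0 - yv) / δ := min_le_right _ _
      have hc : δ * t1 ≤ Θ 0 - yv := by
        rw [le_div_iff₀ hδpos] at hb
        linarith
      linarith
    obtain ⟨t, _, ht⟩ := intermediate_value_Icc' ht12 hΘcont.continuousOn ⟨h1, h2⟩
    exact ⟨t, ht⟩
  -- the inverse of Θ
  set Θd : ℝ → ℝ := fun t => Θ (-t) with hΘddef
  have hΘdmono : StrictMono Θd := fun s1 t1 hst => hΘanti (neg_lt_neg hst)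
  have hΘdsurj : Function.Surjective Θd := by
    intro yv
    obtain ⟨t, ht⟩ := hΘsurj yv
    exact ⟨-t, by simp [hΘddef, ht]⟩
  set iso := StrictMono.orderIsoOfSurjective Θd hΘdmono hΘdsurj with hisodef
  set Θinv : ℝ → ℝ := fun yv => -(iso.symm yv) with hinvdef
  have hΘright : ∀ yv, Θ (Θinv yv) = yv := by
    intro yv
    have h1 : Θd (iso.symm yv) = yv :=
      StrictMono.orderIsoOfSurjective_self_symm_apply Θd hΘdmono hΘdsurj yv
    have h2 : Θd (iso.symm yv) = Θ (-(iso.symm yv)) := rfl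
    rw [h2] at h1
    exact h1
  have hΘleft : ∀ t, Θinv (Θ t) = t := fun t => hΘanti.injective (by rw [hΘright])
  have hinvcont : Continuous Θinv := continuous_neg.comp iso.symm.continuous
  -- the ray lemma: equal angles mod 2π give equal points
  have hπ : (0:ℝ) < Real.pi := Real.pi_pos
  have hray : ∀ t1 t2 : ℝ, Θ t2 = Θ t1 - 2 * Real.pi → z t2 = z t1 ∧ p t2 = p t1 := by
    intro t1 t2 hΘeq
    have hdim : (L t2 - L t1).im = -(2 * Real.pi) := by
      have h1 : (L t2 - L t1).im = Θ t2 - Θ t1 := by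
        show (L t2 - L t1).im = (L t2).im - (L t1).im
        simp
      rw [h1, hΘeq]
      ring
    set r : ℝ := Real.exp ((L t2 - L t1).re) with hrdef
    have hrpos : 0 < r := Real.exp_pos _
    have hexpd : Complex.exp (L t2 - L t1) = (r : ℂ) := by
      have h1 : L t2 - L t1 =
          (((L t2 - L t1).re : ℝ) : ℂ) + (((L t2 - L t1).im : ℝ) : ℂ) * Complex.I :=
        (Complex.re_add_im _).symm
      rw [h1, Complex.exp_add, hdim]
      have h2 : Complex.exp (((-(2*Real.pi):ℝ)) * Complex.I) = 1 := by
        have h3 := Complex.exp_int_mul_two_pi_mul_I (-1)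
        rw [show ((-1 : ℤ) : ℂ) * (2 * Real.pi * Complex.I) =
          ((-(2*Real.pi):ℝ)) * Complex.I by push_cast; ring] at h3
        exact h3
      rw [show ((-(2 * Real.pi) : ℝ) : ℂ) * Complex.I =
        (((-(2*Real.pi):ℝ)) : ℂ) * Complex.I by norm_num] at h2
      rw [h2, mul_one, hrdef, Complex.ofReal_exp]
    have hz2 : z t2 = (r:ℂ) * z t1 := by
      rw [hzL t2, hzL t1]
      have h1 : Complex.exp (L t2) = Complex.exp (L t1) * Complex.exp (L t2 - L t1) := by
        rw [← Complex.exp_add]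
        ring_nf
      rw [h1, hexpd]
      ring
    have hz2' : ((x t2 - c1 : ℝ) : ℂ) + ((y t2 - c2 : ℝ) : ℂ) * Complex.I =
        (r:ℂ) * (((x t1 - c1 : ℝ) : ℂ) + ((y t1 - c2 : ℝ) : ℂ) * Complex.I) := hz2
    have hxeq : x t2 - c1 = r * (x t1 - c1) := by
      have := congrArg Complex.re hz2'
      simpa using this
    have hyeq : y t2 - c2 = r * (y t1 - c2) := by
      have := congrArg Complex.im hz2'
      simpa using this
    -- scaled difference of points
    have hpd : pc - p t2 = r • (pc - p t1) := by
      rw [hdiffpt t2, hdiffpt t1]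
      have e1 : c1 - x t2 = r * (c1 - x t1) := by linear_combination -hxeq
      have e2 : c2 - y t2 = r * (c2 - y t1) := by linear_combination -hyeq
      rw [e1, e2]
      module
    -- r must be 1
    have hr1 : r = 1 := by
      by_contra hne
      rcases lt_or_gt_of_ne hne with hlt | hgt
      · have hcomb : p t2 = r • p t1 + (1 - r) • pc := by
          have h1 : p t2 = pc - r • (pc - p t1) := by
            rw [← hpd]
            module
          rw [h1]
          module
        have hle := (H_convex hH).2 (mem_univ (p t1)) (mem_univ pc) hrpos.le
          (by linarith : (0:ℝ) ≤ 1 - r) (by ring)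
        rw [← hcomb] at hle
        rw [hHp1 t1, hHp1 t2] at hle
        simp only [smul_eq_mul, mul_one] at hle
        have hq : (1 - r) * H pc < (1 - r) * 1 :=
          mul_lt_mul_of_pos_left hpclt (by linarith)
        linarith
      · have hrinvpos : 0 < r⁻¹ := inv_pos.2 hrpos
        have hrinvlt : r⁻¹ < 1 := by
          rw [inv_lt_one_iff₀]
          right; exact hgt
        have hcomb : p t1 = r⁻¹ • p t2 + (1 - r⁻¹) • pc := by
          have h4 : pc - p t1 = r⁻¹ • (pc - p t2) := by
            rw [hpd, smul_smul, inv_mul_cancel₀ hrpos.ne', one_smul]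
          have h5 : p t1 = pc - r⁻¹ • (pc - p t2) := by
            rw [← h4]
            module
          rw [h5]
          module
        have hle := (H_convex hH).2 (mem_univ (p t2)) (mem_univ pc) hrinvpos.le
          (by linarith : (0:ℝ) ≤ 1 - r⁻¹) (by ring)
        rw [← hcomb] at hle
        rw [hHp1 t1, hHp1 t2] at hle
        simp only [smul_eq_mul, mul_one] at hle
        have hq : (1 - r⁻¹) * H pc < (1 - r⁻¹) * 1 :=
          mul_lt_mul_of_pos_left hpclt (by linarith)
        linarith
    constructor
    · rw [hz2, hr1]
      simp
    · have hxx : x t2 = x t1 := by rw [hr1] at hxeq; linarith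
      have hyy : y t2 = y t1 := by rw [hr1] at hyeq; linarith
      rw [hrecon t2, hrecon t1, hxx, hyy]
  -- the period map
  set τ : ℝ → ℝ := fun t => Θinv (Θ t - 2 * Real.pi) with hτdef
  have hτΘ : ∀ t, Θ (τ t) = Θ t - 2 * Real.pi := fun t => hΘright _
  have hτz : ∀ t, z (τ t) = z t ∧ p (τ t) = p t := fun t => hray t (τ t) (hτΘ t)
  have hτpos : 0 < τ 0 := by
    by_contra hc
    push_neg at hc
    have h1 := hΘanti.antitone hc
    rw [hτΘ 0] at h1
    linarith
  have hτ' : ∀ t, HasDerivAt τ 1 t := by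
    intro t
    have hwne : (w (τ t)).im ≠ 0 := by
      have := hwim_le (τ t)
      intro h0
      rw [h0] at this
      linarith
    have hinvd : HasDerivAt Θinv ((w (τ t)).im)⁻¹ (Θ t - 2 * Real.pi) :=
      HasDerivAt.of_local_left_inverse hinvcont.continuousAt (hΘ' (τ t)) hwne
        (Filter.Eventually.of_forall hΘright)
    have hcomp := hinvd.comp t ((hΘ' t).sub_const (2 * Real.pi))
    have hgg : g (τ t) = g t := by
      show grad H (p (τ t)) = grad H (p t)
      rw [(hτz t).2]
    have hwback : w (τ t) = w t := by
      show zd (τ t) / z (τ t) = zd t / z t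
      have hzz : zd (τ t) = zd t := by
        show ((xd (τ t) : ℝ) : ℂ) + ((yd (τ t) : ℝ) : ℂ) * Complex.I
          = ((xd t : ℝ) : ℂ) + ((yd t : ℝ) : ℂ) * Complex.I
        have hxdeq : xd (τ t) = xd t := by
          show a * (g (τ t) ⬝ᵥ f) = a * (g t ⬝ᵥ f)
          rw [hgg]
        have hydeq : yd (τ t) = yd t := by
          show -(a * (g (τ t) ⬝ᵥ e)) = -(a * (g t ⬝ᵥ e))
          rw [hgg]
        rw [hxdeq, hydeq]
      rw [hzz, (hτz t).1]
    rw [hwback] at hcomp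
    have hmul : ((w t).im)⁻¹ * (w t).im = 1 := by
      apply inv_mul_cancel₀
      have := hwim_le t
      intro h0
      rw [h0] at this
      linarith
    rwa [hmul] at hcomp
  have hτlin : ∀ t, τ t = t + τ 0 := by
    have hconst : ∀ t, τ t - t = τ 0 - 0 := by
      intro t
      exact is_const_of_deriv_eq_zero
        (fun s1 => ((hτ' s1).sub (hasDerivAt_id s1)).differentiableAt)
        (fun s1 => by rw [((hτ' s1).sub (hasDerivAt_id s1)).deriv]; ring) t 0
    intro t
    have := hconst t
    linarith
  refine ⟨hpart1, τ 0, hτpos, fun t => ?_⟩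
  have h1 := (hτz t).2
  rw [hτlin t] at h1
  exact h1
end

section
/- Let f : ℝ → ℝ be continuous, periodic with period 2π, and satisfy f(x) > 0 for all x ∈ ℝ. Then for every φ₀ ∈ ℝ there exists a unique differentiable function φ : ℝ → ℝ with φ(0) = φ₀ and φ'(t) = f(φ(t)) for all t ∈ ℝ; moreover there exists T > 0 such that φ(t + T) = φ(t) + 2π for all t ∈ ℝ. -/
open intervalIntegral Filter

/-- Scalar lemma: if `f : ℝ → ℝ` is continuous, `2π`-periodic and everywhere positive,
then for every initial value `φ₀` the ODE `φ' = f(φ)`, `φ(0) = φ₀` has a unique global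
solution, and this solution satisfies `φ(t + T) = φ(t) + 2π` for some `T > 0`. -/
theorem scalar_ode_unique_and_shift_periodic
    (f : ℝ → ℝ) (hf : Continuous f) (hper : Function.Periodic f (2 * Real.pi))
    (hpos : ∀ x : ℝ, 0 < f x) :
    ∀ φ₀ : ℝ, ∃ φ : ℝ → ℝ,
      (φ 0 = φ₀ ∧ ∀ t : ℝ, HasDerivAt φ (f (φ t)) t) ∧
      (∀ ψ : ℝ → ℝ, ψ 0 = φ₀ → (∀ t : ℝ, HasDerivAt ψ (f (ψ t)) t) → ψ = φ) ∧
      ∃ T : ℝ, 0 < T ∧ ∀ t : ℝ, φ (t + T) = φ t + 2 * Real.pi := by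
  intro φ₀
  have h2pi : (0:ℝ) < 2 * Real.pi := by positivity
  -- the inverse of f is continuous
  have hfinv : Continuous fun s => (f s)⁻¹ :=
    hf.inv₀ fun s => (hpos s).ne'
  -- upper bound on f
  obtain ⟨x₀, -, hx₀⟩ :=
    (isCompact_Icc (a := (0:ℝ)) (b := 2 * Real.pi)).exists_isMaxOn
      (Set.nonempty_Icc.2 h2pi.le) hf.continuousOn
  set M := f x₀ with hM
  have hMpos : 0 < M := hpos x₀
  have hfM : ∀ x, f x ≤ M := by
    intro x
    obtain ⟨y, hy, hxy⟩ := hper.exists_mem_Ico₀ h2pi x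
    rw [hxy]
    exact hx₀ ⟨hy.1, hy.2.le⟩
  -- the primitive g of 1/f
  set g : ℝ → ℝ := fun y => ∫ s in (0:ℝ)..y, (f s)⁻¹ with hg_def
  have hg : ∀ y, HasDerivAt g ((f y)⁻¹) y := fun y =>
    (hfinv.integral_hasStrictDerivAt 0 y).hasDerivAt
  have hgdiff : Differentiable ℝ g := fun y => (hg y).differentiableAt
  have hgmono : StrictMono g := by
    apply strictMono_of_deriv_pos
    intro y
    rw [(hg y).deriv]
    exact inv_pos.2 (hpos y)
  -- lower bounds on g for surjectivity
  have hbound : ∀ y : ℝ, 0 ≤ y → M⁻¹ * y ≤ g y := by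
    intro y hy
    have : ∫ s in (0:ℝ)..y, M⁻¹ ≤ ∫ s in (0:ℝ)..y, (f s)⁻¹ := by
      apply intervalIntegral.integral_mono_on hy
        (intervalIntegrable_const) (hfinv.intervalIntegrable _ _)
      intro s _
      exact inv_anti₀ (hpos s) (hfM s)
    simpa [mul_comm] using this
  have hbound' : ∀ y : ℝ, y ≤ 0 → g y ≤ M⁻¹ * y := by
    intro y hy
    have : ∫ s in y..(0:ℝ), M⁻¹ ≤ ∫ s in y..(0:ℝ), (f s)⁻¹ := by
      apply intervalIntegral.integral_mono_on hy
        (intervalIntegrable_const) (hfinv.intervalIntegrable _ _)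
      intro s _
      exact inv_anti₀ (hpos s) (hfM s)
    have h0 : g y = -∫ s in y..(0:ℝ), (f s)⁻¹ := intervalIntegral.integral_symm y 0
    rw [h0]
    have : M⁻¹ * (0 - y) ≤ ∫ s in y..(0:ℝ), (f s)⁻¹ := by
      simpa [mul_comm] using this
    linarith
  have htop : Tendsto g atTop atTop := by
    apply tendsto_atTop_mono' _ _ (tendsto_id.const_mul_atTop (inv_pos.2 hMpos))
    filter_upwards [eventually_ge_atTop (0:ℝ)] with y hy using hbound y hy
  have hbot : Tendsto g atBot atBot := by
    apply tendsto_atBot_mono' _ _ (tendsto_id.const_mul_atBot (inv_pos.2 hMpos))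
    filter_upwards [eventually_le_atBot (0:ℝ)] with y hy using hbound' y hy
  have hgsurj : Function.Surjective g := hgdiff.continuous.surjective htop hbot
  -- the order isomorphism
  set e := StrictMono.orderIsoOfSurjective g hgmono hgsurj with he
  have he_apply : ∀ y, e y = g y := fun y => rfl
  have hesymm_cont : Continuous (e.symm : ℝ → ℝ) := e.symm.continuous
  -- the solution
  set φ : ℝ → ℝ := fun t => e.symm (t + g φ₀) with hφ_def
  have hgφ : ∀ t, g (φ t) = t + g φ₀ := fun t =>
    StrictMono.orderIsoOfSurjective_self_symm_apply g hgmono hgsurj _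
  have hφ0 : φ 0 = φ₀ := by
    have : g (φ 0) = g φ₀ := by rw [hgφ]; ring
    exact hgmono.injective this
  have hesymm_deriv : ∀ s : ℝ, HasDerivAt (e.symm : ℝ → ℝ) (f (e.symm s)) s := by
    intro s
    have h1 : HasDerivAt g ((f (e.symm s))⁻¹) (e.symm s) := hg _
    have h2 : g (e.symm s) = s :=
      StrictMono.orderIsoOfSurjective_self_symm_apply g hgmono hgsurj _
    have h3 : (f (e.symm s))⁻¹ ≠ 0 := inv_ne_zero (hpos _).ne'
    have h4 : ∀ᶠ z in nhds s, g (e.symm z) = z :=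
      Filter.Eventually.of_forall fun z =>
        StrictMono.orderIsoOfSurjective_self_symm_apply g hgmono hgsurj _
    have := HasDerivAt.of_local_left_inverse (hesymm_cont.continuousAt)
      h1 h3 h4
    simpa using this
  have hφderiv : ∀ t, HasDerivAt φ (f (φ t)) t := by
    intro t
    have h1 : HasDerivAt (fun t : ℝ => t + g φ₀) 1 t :=
      (hasDerivAt_id t).add_const _
    have := (hesymm_deriv (t + g φ₀)).comp t h1
    simpa [hφ_def, Function.comp_def] using this
  -- uniqueness
  have huniq : ∀ ψ : ℝ → ℝ, ψ 0 = φ₀ → (∀ t, HasDerivAt ψ (f (ψ t)) t) → ψ = φ := by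
    intro ψ hψ0 hψd
    have hGd : ∀ t, HasDerivAt (fun t => g (ψ t) - t) 0 t := by
      intro t
      have h1 : HasDerivAt (fun t => g (ψ t)) ((f (ψ t))⁻¹ * f (ψ t)) t :=
        (hg (ψ t)).comp t (hψd t)
      have h2 : (f (ψ t))⁻¹ * f (ψ t) = 1 := inv_mul_cancel₀ (hpos _).ne'
      have := h1.sub (hasDerivAt_id t)
      simpa [h2, Pi.sub_def] using this
    have hconst : ∀ t : ℝ, g (ψ t) - t = g (ψ 0) - 0 := by
      have := is_const_of_deriv_eq_zero (f := fun t => g (ψ t) - t)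
        (fun t => (hGd t).differentiableAt) (fun t => (hGd t).deriv)
      intro t; exact this t 0
    funext t
    apply hgmono.injective
    have := hconst t
    rw [hψ0] at this
    rw [hgφ t]
    linarith
  -- periodicity
  set T := g (φ₀ + 2 * Real.pi) - g φ₀ with hT_def
  have hTpos : 0 < T := by
    have := hgmono (lt_add_of_pos_right φ₀ h2pi)
    simpa [hT_def] using sub_pos.2 this
  have hshift : ∀ y : ℝ, g (y + 2 * Real.pi) = g y + T := by
    have hDd : ∀ y, HasDerivAt (fun y => g (y + 2 * Real.pi) - g y) 0 y := by
      intro y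
      have h1 : HasDerivAt (fun y : ℝ => g (y + 2 * Real.pi))
          ((f (y + 2 * Real.pi))⁻¹ * 1) y :=
        by have := (hg (y + 2 * Real.pi)).comp y ((hasDerivAt_id y).add_const (2 * Real.pi))
           simpa [Function.comp_def] using this
      have := h1.sub (hg y)
      have hper' : f (y + 2 * Real.pi) = f y := hper y
      simpa [hper', Pi.sub_def] using this
    have hconst := is_const_of_deriv_eq_zero
      (f := fun y => g (y + 2 * Real.pi) - g y)
      (fun y => (hDd y).differentiableAt) (fun y => (hDd y).deriv)
    intro y
    have := hconst y φ₀
    simp only [hT_def]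
    linarith
  refine ⟨φ, ⟨hφ0, hφderiv⟩, huniq, T, hTpos, fun t => ?_⟩
  apply hgmono.injective
  rw [hgφ, hshift, hgφ]
  ring
end
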